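/- arXiv:1609.08571 — 9 statements merged into one kernel-verified Lean document; each statement's English description precedes it below -/
import Mathlib

section
/- Let T ≥ 1 and d ≥ 1, let U_1, …, U_T be unitary d×d complex matrices, let a_0,…,a_T be real numbers and b_0,…,b_{T−1} complex numbers. Define on ℂ^{T+1}⊗ℂ^d the matrices H_prop := Σ_{t=0}^T a_t |t⟩⟨t|⊗I_d + Σ_{t=0}^{T−1} ( b_t |t+1⟩⟨t| ⊗ U_{t+1} + conj(b_t) |t⟩⟨t+1| ⊗ U_{t+1}^† ) and W := Σ_{t=0}^T |t⟩⟨t| ⊗ (U_t⋯U_1), where the empty product for t = 0 is I_d. Then W is unitary and W^† H_prop W = H_clock ⊗ I_d, where H_clock := Σ_{t=0}^T a_t |t⟩⟨t| + Σ_{t=0}^{T−1} ( b_t |t+1⟩⟨t| + conj(b_t) |t⟩⟨t+1| ) acts on ℂ^{T+1}. -/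
open Matrix Kronecker

/-!
`W` is block diagonal with unitary blocks `P_t = U_t ⋯ U_1`, and conjugation by it sends
`|s⟩⟨t| ⊗ M` to `|s⟩⟨t| ⊗ P_s† M P_t`. Since `P_{t+1} = U_{t+1} P_t`, each hopping block
`U_{t+1}` (and its adjoint) is conjugated to the identity, as is each diagonal block.
-/

/-- The ordered product `U_t ⋯ U_1` (the empty product for `t = 0` is the identity). -/
noncomputable def prodU (d : ℕ) (U : ℕ → Matrix (Fin d) (Fin d) ℂ) (t : ℕ) :
    Matrix (Fin d) (Fin d) ℂ :=
  ((List.range t).reverse.map (fun i => U (i + 1))).prod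

/-- The modified Feynman propagation Hamiltonian on `ℂ^{T+1} ⊗ ℂ^d`. -/
noncomputable def Hprop (T d : ℕ) (U : ℕ → Matrix (Fin d) (Fin d) ℂ)
    (a : Fin (T + 1) → ℝ) (b : Fin T → ℂ) :
    Matrix (Fin (T + 1) × Fin d) (Fin (T + 1) × Fin d) ℂ :=
  (∑ t : Fin (T + 1), (a t : ℂ) •
      (Matrix.single t t (1 : ℂ) ⊗ₖ (1 : Matrix (Fin d) (Fin d) ℂ)))
  + ∑ t : Fin T,
      (b t • (Matrix.single t.succ t.castSucc (1 : ℂ) ⊗ₖ U (t.val + 1))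
        + (starRingEnd ℂ) (b t) •
            (Matrix.single t.castSucc t.succ (1 : ℂ) ⊗ₖ (U (t.val + 1))ᴴ))

/-- The clock Hamiltonian on `ℂ^{T+1}`. -/
noncomputable def Hclock (T : ℕ) (a : Fin (T + 1) → ℝ) (b : Fin T → ℂ) :
    Matrix (Fin (T + 1)) (Fin (T + 1)) ℂ :=
  (∑ t : Fin (T + 1), (a t : ℂ) • Matrix.single t t (1 : ℂ))
  + ∑ t : Fin T,
      (b t • Matrix.single t.succ t.castSucc (1 : ℂ)
        + (starRingEnd ℂ) (b t) • Matrix.single t.castSucc t.succ (1 : ℂ))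

/-- The history unitary `W = Σ_t |t⟩⟨t| ⊗ (U_t ⋯ U_1)`. -/
noncomputable def Wop (T d : ℕ) (U : ℕ → Matrix (Fin d) (Fin d) ℂ) :
    Matrix (Fin (T + 1) × Fin d) (Fin (T + 1) × Fin d) ℂ :=
  ∑ t : Fin (T + 1), Matrix.single t t (1 : ℂ) ⊗ₖ prodU d U t.val

namespace Matrix

theorem sum_kronecker {α l m R : Type*} [NonUnitalNonAssocSemiring R] (s : Finset α)
    (f : α → Matrix l l R) (B : Matrix m m R) : (∑ i ∈ s, f i) ⊗ₖ B = ∑ i ∈ s, f i ⊗ₖ B := by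
  ext ⟨i, k⟩ ⟨j, l⟩
  simp [Matrix.sum_apply, Finset.sum_mul]

variable {ι κ R : Type*} [Fintype ι] [DecidableEq ι] [CommRing R]

def blockDiagKron (A : ι → Matrix κ κ R) : Matrix (ι × κ) (ι × κ) R :=
  ∑ r, single r r (1 : R) ⊗ₖ A r

theorem blockDiagKron_mul_single_kronecker [Fintype κ] (A : ι → Matrix κ κ R) (s t : ι)
    (M : Matrix κ κ R) :
    blockDiagKron A * (single s t (1 : R) ⊗ₖ M) = single s t (1 : R) ⊗ₖ (A s * M) := by
  rw [blockDiagKron, Finset.sum_mul, Finset.sum_eq_single s]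
  · rw [← mul_kronecker_mul, single_mul_single_same, one_mul]
  · intro r _ hr
    rw [← mul_kronecker_mul, single_mul_single_of_ne (h := hr), zero_kronecker]
  · simp

theorem single_kronecker_mul_blockDiagKron [Fintype κ] (A : ι → Matrix κ κ R) (s t : ι)
    (M : Matrix κ κ R) :
    (single s t (1 : R) ⊗ₖ M) * blockDiagKron A = single s t (1 : R) ⊗ₖ (M * A t) := by
  rw [blockDiagKron, Finset.mul_sum, Finset.sum_eq_single t]
  · rw [← mul_kronecker_mul, single_mul_single_same, one_mul]
  · intro r _ hr
    rw [← mul_kronecker_mul, single_mul_single_of_ne (h := Ne.symm hr), zero_kronecker]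
  · simp

theorem blockDiagKron_mul_blockDiagKron [Fintype κ] (A B : ι → Matrix κ κ R) :
    blockDiagKron A * blockDiagKron B = blockDiagKron (fun r => A r * B r) := by
  conv_lhs => rw [blockDiagKron, Finset.sum_mul]
  exact Finset.sum_congr rfl fun r _ => single_kronecker_mul_blockDiagKron B r r (A r)

theorem blockDiagKron_one [DecidableEq κ] :
    blockDiagKron (fun _ : ι => (1 : Matrix κ κ R)) = 1 := by
  rw [blockDiagKron, ← sum_kronecker, sum_single_one, one_kronecker_one]

variable [StarRing R]

theorem conjTranspose_blockDiagKron (A : ι → Matrix κ κ R) :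
    (blockDiagKron A)ᴴ = blockDiagKron (fun r => (A r)ᴴ) := by
  simp only [blockDiagKron, conjTranspose_sum, conjTranspose_kronecker, conjTranspose_single,
    star_one]

theorem blockDiagKron_mem_unitaryGroup [Fintype κ] [DecidableEq κ] {A : ι → Matrix κ κ R}
    (hA : ∀ r, A r ∈ unitaryGroup κ R) : blockDiagKron A ∈ unitaryGroup (ι × κ) R := by
  have hA' (r : ι) : (A r)ᴴ * A r = 1 := mem_unitaryGroup_iff'.mp (hA r)
  rw [mem_unitaryGroup_iff', star_eq_conjTranspose, conjTranspose_blockDiagKron,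
    blockDiagKron_mul_blockDiagKron]
  simp only [hA', blockDiagKron_one]

theorem conjTranspose_blockDiagKron_mul_single_kronecker_mul [Fintype κ] (A : ι → Matrix κ κ R)
    (s t : ι) (M : Matrix κ κ R) :
    (blockDiagKron A)ᴴ * (single s t (1 : R) ⊗ₖ M) * blockDiagKron A
      = single s t (1 : R) ⊗ₖ ((A s)ᴴ * M * A t) := by
  rw [conjTranspose_blockDiagKron, blockDiagKron_mul_single_kronecker,
    single_kronecker_mul_blockDiagKron]

end Matrix

section HistoryUnitary

variable {d : ℕ} {U : ℕ → Matrix (Fin d) (Fin d) ℂ}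

theorem prodU_zero : prodU d U 0 = 1 := by
  simp [prodU]

theorem prodU_succ (t : ℕ) : prodU d U (t + 1) = U (t + 1) * prodU d U t := by
  simp [prodU, List.range_succ]

theorem prodU_mem_unitaryGroup {t : ℕ}
    (hU : ∀ i, 1 ≤ i → i ≤ t → U i ∈ unitaryGroup (Fin d) ℂ) :
    prodU d U t ∈ unitaryGroup (Fin d) ℂ := by
  induction t with
  | zero => rw [prodU_zero]; exact one_mem _
  | succ k ih =>
    rw [prodU_succ]
    exact mul_mem (hU (k + 1) k.succ_pos le_rfl)
      (ih fun i hi hik => hU i hi (hik.trans k.le_succ))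

theorem Wop_eq_blockDiagKron (T : ℕ) :
    Wop T d U = blockDiagKron (fun t : Fin (T + 1) => prodU d U t) := rfl

end HistoryUnitary

theorem stmt0_general (T d : ℕ)
    (U : ℕ → Matrix (Fin d) (Fin d) ℂ)
    (hU : ∀ i, 1 ≤ i → i ≤ T → U i ∈ Matrix.unitaryGroup (Fin d) ℂ)
    (a : Fin (T + 1) → ℝ) (b : Fin T → ℂ) :
    Wop T d U ∈ Matrix.unitaryGroup (Fin (T + 1) × Fin d) ℂ ∧
      (Wop T d U)ᴴ * Hprop T d U a b * Wop T d U
        = Hclock T a b ⊗ₖ (1 : Matrix (Fin d) (Fin d) ℂ) := by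
  have hP (t : Fin (T + 1)) : prodU d U t ∈ unitaryGroup (Fin d) ℂ :=
    prodU_mem_unitaryGroup fun i hi hit => hU i hi (hit.trans t.is_le)
  have hPP (t : Fin (T + 1)) : (prodU d U t)ᴴ * prodU d U t = 1 :=
    Unitary.star_mul_self_of_mem (hP t)
  refine ⟨blockDiagKron_mem_unitaryGroup hP, ?_⟩
  have diag (t : Fin (T + 1)) : (prodU d U t)ᴴ * 1 * prodU d U t = 1 := by
    rw [mul_one, hPP]
  have forward (t : Fin T) :
      (prodU d U t.succ)ᴴ * U (t + 1) * prodU d U t.castSucc = 1 := by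
    rw [mul_assoc, Fin.val_castSucc, ← prodU_succ, ← Fin.val_succ, hPP]
  have backward (t : Fin T) :
      (prodU d U t.castSucc)ᴴ * (U (t + 1))ᴴ * prodU d U t.succ = 1 := by
    rw [← conjTranspose_mul, Fin.val_castSucc, ← prodU_succ, ← Fin.val_succ, hPP]
  rw [Hprop, Hclock, Wop_eq_blockDiagKron]
  simp only [Matrix.mul_add, Matrix.add_mul, Finset.mul_sum, Finset.sum_mul, Matrix.mul_smul,
    Matrix.smul_mul, conjTranspose_blockDiagKron_mul_single_kronecker_mul, diag, forward,
    backward, add_kronecker, sum_kronecker, smul_kronecker]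

theorem stmt0 (T d : ℕ) (hT : 1 ≤ T) (hd : 1 ≤ d)
    (U : ℕ → Matrix (Fin d) (Fin d) ℂ)
    (hU : ∀ i, 1 ≤ i → i ≤ T → U i ∈ Matrix.unitaryGroup (Fin d) ℂ)
    (a : Fin (T + 1) → ℝ) (b : Fin T → ℂ) :
    Wop T d U ∈ Matrix.unitaryGroup (Fin (T + 1) × Fin d) ℂ ∧
      (Wop T d U)ᴴ * Hprop T d U a b * Wop T d U
        = Hclock T a b ⊗ₖ (1 : Matrix (Fin d) (Fin d) ℂ) :=
  stmt0_general T d U hU a b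
end

section
/- Let A and B be positive semidefinite Hermitian n×n complex matrices with ker A ≠ {0}, ker B ≠ {0}, and ker A ∩ ker B = {0}. Let m_A (respectively m_B) be the smallest nonzero eigenvalue of A (respectively B), and let c := max{ |⟨ξ, η⟩| : ξ ∈ ker A, η ∈ ker B, ‖ξ‖ = ‖η‖ = 1 }. Then for every ψ ∈ ℂ^n, ⟨ψ, (A+B)ψ⟩ ≥ min{m_A, m_B} · (1 − c) · ‖ψ‖². -/
/-!
Let ξ and η be the components of ψ in the kernels of A and B, read off in eigenbases. The spectral
gaps give ⟪ψ, Aψ⟫ ≥ m_A ‖ψ - ξ‖² and ⟪ψ, Bψ⟫ ≥ m_B ‖ψ - η‖². Since ξ, η are orthogonal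
projections of ψ, ‖ξ‖² + ‖η‖² = re ⟪ξ + η, ψ⟫ ≤ ‖ξ + η‖ ‖ψ‖, while the angle bound
|⟪ξ, η⟫| ≤ c ‖ξ‖ ‖η‖ gives ‖ξ + η‖² ≤ (1 + c)(‖ξ‖² + ‖η‖²). Hence ‖ξ‖² + ‖η‖² ≤ (1 + c)‖ψ‖², that is
‖ψ - ξ‖² + ‖ψ - η‖² ≥ (1 - c)‖ψ‖².
-/

open Matrix ComplexOrder

open scoped InnerProductSpace

section InnerProductSpace

variable {𝕜 E ι : Type*} [RCLike 𝕜] [NormedAddCommGroup E] [InnerProductSpace 𝕜 E]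

theorem norm_inner_le_mul_norm_mul_norm_of_unit {K L : Submodule 𝕜 E} {c : ℝ}
    (hc : ∀ u ∈ K, ∀ v ∈ L, ‖u‖ = 1 → ‖v‖ = 1 → ‖⟪u, v⟫_𝕜‖ ≤ c) {x y : E}
    (hx : x ∈ K) (hy : y ∈ L) : ‖⟪x, y⟫_𝕜‖ ≤ c * ‖x‖ * ‖y‖ := by
  rcases eq_or_ne x 0 with rfl | hx0
  · simp
  rcases eq_or_ne y 0 with rfl | hy0
  · simp
  have hxn : 0 < ‖x‖ := norm_pos_iff.2 hx0
  have hyn : 0 < ‖y‖ := norm_pos_iff.2 hy0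
  have hunit := hc ((‖x‖⁻¹ : 𝕜) • x) (K.smul_mem _ hx) ((‖y‖⁻¹ : 𝕜) • y) (L.smul_mem _ hy)
    (norm_smul_inv_norm hx0) (norm_smul_inv_norm hy0)
  rw [inner_smul_left, inner_smul_right, norm_mul, norm_mul, RCLike.norm_conj] at hunit
  simp only [norm_inv, RCLike.norm_ofReal, abs_norm] at hunit
  rw [← div_le_iff₀ hyn, ← div_le_iff₀ hxn]
  calc ‖⟪x, y⟫_𝕜‖ / ‖y‖ / ‖x‖ = ‖x‖⁻¹ * (‖y‖⁻¹ * ‖⟪x, y⟫_𝕜‖) := by ring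
    _ ≤ c := hunit

theorem one_sub_mul_norm_sq_le_norm_sub_sq_add_norm_sub_sq {ψ ξ η : E} {c : ℝ} (hc : 0 ≤ c)
    (hξ : ⟪ξ, ψ - ξ⟫_𝕜 = 0) (hη : ⟪η, ψ - η⟫_𝕜 = 0) (hξη : ‖⟪ξ, η⟫_𝕜‖ ≤ c * ‖ξ‖ * ‖η‖) :
    (1 - c) * ‖ψ‖ ^ 2 ≤ ‖ψ - ξ‖ ^ 2 + ‖ψ - η‖ ^ 2 := by
  have pythag : ∀ v : E, ⟪v, ψ - v⟫_𝕜 = 0 → ‖ψ - v‖ ^ 2 = ‖ψ‖ ^ 2 - ‖v‖ ^ 2 := fun v hv => by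
    have := norm_add_sq (𝕜 := 𝕜) v (ψ - v)
    rw [hv, add_sub_cancel, map_zero] at this
    linarith
  have proj : ∀ v : E, ⟪v, ψ - v⟫_𝕜 = 0 → RCLike.re ⟪v, ψ⟫_𝕜 = ‖v‖ ^ 2 := fun v hv => by
    rw [inner_sub_right, sub_eq_zero] at hv
    rw [hv, inner_self_eq_norm_sq]
  set s := ‖ξ‖ ^ 2 + ‖η‖ ^ 2
  -- the angle bound, then AM-GM on 2 ‖ξ‖ ‖η‖
  have hsum_sq : ‖ξ + η‖ ^ 2 ≤ (1 + c) * s := by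
    rw [norm_add_sq (𝕜 := 𝕜)]
    have := (RCLike.re_le_norm ⟪ξ, η⟫_𝕜).trans hξη
    nlinarith [mul_nonneg hc (sq_nonneg (‖ξ‖ - ‖η‖))]
  -- Cauchy-Schwarz, as s = re ⟪ξ + η, ψ⟫
  have hs : s ^ 2 ≤ (1 + c) * s * ‖ψ‖ ^ 2 := by
    have hre : s = RCLike.re ⟪ξ + η, ψ⟫_𝕜 := by
      rw [inner_add_left, map_add, proj ξ hξ, proj η hη]
    have hcs := (RCLike.re_le_norm _).trans (norm_inner_le_norm (𝕜 := 𝕜) (ξ + η) ψ)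
    rw [← hre] at hcs
    calc s ^ 2 ≤ (‖ξ + η‖ * ‖ψ‖) ^ 2 := pow_le_pow_left₀ (by positivity) hcs 2
      _ = ‖ξ + η‖ ^ 2 * ‖ψ‖ ^ 2 := mul_pow _ _ _
      _ ≤ (1 + c) * s * ‖ψ‖ ^ 2 := by gcongr
  have hs_le : s ≤ (1 + c) * ‖ψ‖ ^ 2 := by
    rcases (by positivity : 0 ≤ s).eq_or_lt with h0 | hpos
    · rw [← h0]; positivity
    · nlinarith
  rw [pythag ξ hξ, pythag η hη]
  linarith

variable [Fintype ι]

theorem OrthonormalBasis.re_inner_apply_self_eq_sum (b : OrthonormalBasis ι 𝕜 E)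
    {T : E →ₗ[𝕜] E} {μ : ι → ℝ} (hT : ∀ i, T (b i) = (μ i : 𝕜) • b i) (x : E) :
    RCLike.re ⟪x, T x⟫_𝕜 = ∑ i, μ i * ‖b.repr x i‖ ^ 2 := by
  conv_lhs => rw [← b.sum_repr x, map_sum]
  simp only [map_smul, hT, inner_sum, inner_smul_right, b.sum_repr, map_sum]
  refine Finset.sum_congr rfl fun i _ => ?_
  rw [← inner_conj_symm, ← b.repr_apply_apply, ← mul_assoc, mul_comm, ← mul_assoc,
    RCLike.conj_mul]
  norm_cast
  ring

theorem OrthonormalBasis.exists_mem_ker_mul_norm_sub_sq_le (b : OrthonormalBasis ι 𝕜 E)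
    {T : E →ₗ[𝕜] E} {μ : ι → ℝ} (hT : ∀ i, T (b i) = (μ i : 𝕜) • b i) {m : ℝ}
    (hm : ∀ i, μ i ≠ 0 → m ≤ μ i) (ψ : E) :
    ∃ ξ, T ξ = 0 ∧ ⟪ξ, ψ - ξ⟫_𝕜 = 0 ∧ m * ‖ψ - ξ‖ ^ 2 ≤ RCLike.re ⟪ψ, T ψ⟫_𝕜 := by
  classical
  -- ξ keeps the coordinates of ψ along the eigenvectors with eigenvalue zero
  set z : EuclideanSpace 𝕜 ι := WithLp.toLp 2 fun i => if μ i = 0 then b.repr ψ i else 0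
  have hrepr : ∀ i, b.repr (ψ - b.repr.symm z) i = if μ i = 0 then 0 else b.repr ψ i := by
    intro i
    simp only [map_sub, LinearIsometryEquiv.apply_symm_apply, PiLp.sub_apply, z]
    split_ifs <;> simp
  refine ⟨b.repr.symm z, ?_, ?_, ?_⟩
  · rw [← b.sum_repr_symm, map_sum]
    refine Finset.sum_eq_zero fun i _ => ?_
    rw [map_smul, hT]
    by_cases h : μ i = 0 <;> simp [z, h]
  · rw [← b.repr.inner_map_map, LinearIsometryEquiv.apply_symm_apply, PiLp.inner_apply]
    refine Finset.sum_eq_zero fun i _ => ?_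
    rw [hrepr]
    by_cases h : μ i = 0 <;> simp [z, h]
  · rw [b.re_inner_apply_self_eq_sum hT, ← b.repr.norm_map, EuclideanSpace.norm_sq_eq,
      Finset.mul_sum]
    refine Finset.sum_le_sum fun i _ => ?_
    rw [hrepr]
    split_ifs with h
    · simp [h]
    · exact mul_le_mul_of_nonneg_right (hm i h) (by positivity)

end InnerProductSpace

section Matrix

variable {𝕜 n : Type*} [RCLike 𝕜] [Fintype n]

theorem Matrix.star_dotProduct_eq_inner (v w : n → 𝕜) :
    star v ⬝ᵥ w = ⟪WithLp.toLp 2 v, WithLp.toLp 2 w⟫_𝕜 := by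
  rw [EuclideanSpace.inner_toLp_toLp, dotProduct_comm]

variable [DecidableEq n]

theorem Matrix.mem_ker_toEuclideanLin {A : Matrix n n 𝕜} {x : EuclideanSpace 𝕜 n} :
    x ∈ LinearMap.ker (toEuclideanLin A) ↔ A *ᵥ WithLp.ofLp x = 0 := by
  rw [LinearMap.mem_ker, toLpLin_apply, WithLp.toLp_eq_zero]

theorem Matrix.IsHermitian.toEuclideanLin_eigenvectorBasis {A : Matrix n n 𝕜}
    (hA : A.IsHermitian) (j : n) :
    toEuclideanLin A (hA.eigenvectorBasis j) = (hA.eigenvalues j : 𝕜) • hA.eigenvectorBasis j := by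
  rw [toLpLin_apply, hA.mulVec_eigenvectorBasis, RCLike.real_smul_eq_coe_smul (K := 𝕜)]
  rfl

theorem Matrix.IsHermitian.exists_mem_ker_mul_norm_sub_sq_le {A : Matrix n n 𝕜}
    (hA : A.IsHermitian) {m : ℝ} (hm : m ∈ lowerBounds {r | (∃ i, hA.eigenvalues i = r) ∧ r ≠ 0})
    (ψ : n → 𝕜) :
    ∃ ξ ∈ LinearMap.ker (toEuclideanLin A), ⟪ξ, WithLp.toLp 2 ψ - ξ⟫_𝕜 = 0 ∧
      m * ‖WithLp.toLp 2 ψ - ξ‖ ^ 2 ≤ RCLike.re (star ψ ⬝ᵥ A *ᵥ ψ) := by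
  rw [star_dotProduct_eq_inner]
  exact hA.eigenvectorBasis.exists_mem_ker_mul_norm_sub_sq_le hA.toEuclideanLin_eigenvectorBasis
    (fun i hi => hm ⟨⟨i, rfl⟩, hi⟩) _

theorem Matrix.norm_inner_le_of_mem_upperBounds {A B : Matrix n n 𝕜} {c : ℝ}
    (hc : c ∈ upperBounds {r : ℝ | ∃ ξ η : n → 𝕜, A *ᵥ ξ = 0 ∧ B *ᵥ η = 0 ∧
      star ξ ⬝ᵥ ξ = 1 ∧ star η ⬝ᵥ η = 1 ∧ ‖star ξ ⬝ᵥ η‖ = r})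
    {ξ η : EuclideanSpace 𝕜 n} (hξ : ξ ∈ LinearMap.ker (toEuclideanLin A))
    (hη : η ∈ LinearMap.ker (toEuclideanLin B)) : ‖⟪ξ, η⟫_𝕜‖ ≤ c * ‖ξ‖ * ‖η‖ := by
  refine norm_inner_le_mul_norm_mul_norm_of_unit (fun u hu v hv hu1 hv1 => hc ?_) hξ hη
  refine ⟨WithLp.ofLp u, WithLp.ofLp v, mem_ker_toEuclideanLin.1 hu,
    mem_ker_toEuclideanLin.1 hv, ?_, ?_, ?_⟩ <;>
    simp only [star_dotProduct_eq_inner, WithLp.toLp_ofLp, inner_self_eq_norm_sq_to_K, hu1, hv1]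
    <;> simp

end Matrix

theorem stmt1_general (n : ℕ) (A B : Matrix (Fin n) (Fin n) ℂ)
    (hA : A.PosSemidef) (hB : B.PosSemidef)
    (mA mB : ℝ)
    (hmA : IsLeast {r : ℝ | (∃ i, hA.1.eigenvalues i = r) ∧ r ≠ 0} mA)
    (hmB : IsLeast {r : ℝ | (∃ i, hB.1.eigenvalues i = r) ∧ r ≠ 0} mB)
    (c : ℝ)
    (hc : IsGreatest {r : ℝ | ∃ ξ η : Fin n → ℂ,
        A.mulVec ξ = 0 ∧ B.mulVec η = 0 ∧
        star ξ ⬝ᵥ ξ = 1 ∧ star η ⬝ᵥ η = 1 ∧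
        ‖star ξ ⬝ᵥ η‖ = r} c) :
    ∀ ψ : Fin n → ℂ,
      min mA mB * (1 - c) * (star ψ ⬝ᵥ ψ).re ≤ (star ψ ⬝ᵥ (A + B).mulVec ψ).re := by
  intro ψ
  have hmA0 : 0 ≤ mA := by
    obtain ⟨⟨i, rfl⟩, -⟩ := hmA.1
    exact hA.eigenvalues_nonneg i
  have hmB0 : 0 ≤ mB := by
    obtain ⟨⟨i, rfl⟩, -⟩ := hmB.1
    exact hB.eigenvalues_nonneg i
  have hc0 : 0 ≤ c := by
    obtain ⟨_, _, _, _, _, _, rfl⟩ := hc.1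
    exact norm_nonneg _
  obtain ⟨ξ, hAξ, hξ, hψξ⟩ := hA.1.exists_mem_ker_mul_norm_sub_sq_le hmA.2 ψ
  obtain ⟨η, hBη, hη, hψη⟩ := hB.1.exists_mem_ker_mul_norm_sub_sq_le hmB.2 ψ
  have hgeom := one_sub_mul_norm_sq_le_norm_sub_sq_add_norm_sub_sq hc0 hξ hη
    (norm_inner_le_of_mem_upperBounds hc.2 hAξ hBη)
  have hnorm : (star ψ ⬝ᵥ ψ).re = ‖WithLp.toLp 2 ψ‖ ^ 2 := by
    rw [star_dotProduct_eq_inner]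
    exact inner_self_eq_norm_sq (𝕜 := ℂ) _
  calc min mA mB * (1 - c) * (star ψ ⬝ᵥ ψ).re
      ≤ min mA mB * (‖WithLp.toLp 2 ψ - ξ‖ ^ 2 + ‖WithLp.toLp 2 ψ - η‖ ^ 2) := by
        rw [hnorm, mul_assoc]
        gcongr
    _ ≤ mA * ‖WithLp.toLp 2 ψ - ξ‖ ^ 2 + mB * ‖WithLp.toLp 2 ψ - η‖ ^ 2 := by
        rw [mul_add]
        gcongr
        exacts [min_le_left _ _, min_le_right _ _]
    _ ≤ _ := add_le_add hψξ hψη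
    _ = (star ψ ⬝ᵥ (A + B).mulVec ψ).re := by rw [add_mulVec, dotProduct_add, Complex.add_re]; rfl

/-- Kitaev's geometrical lemma. -/
theorem stmt1 (n : ℕ) (A B : Matrix (Fin n) (Fin n) ℂ)
    (hA : A.PosSemidef) (hB : B.PosSemidef)
    (hkerA : ∃ ξ : Fin n → ℂ, ξ ≠ 0 ∧ A.mulVec ξ = 0)
    (hkerB : ∃ η : Fin n → ℂ, η ≠ 0 ∧ B.mulVec η = 0)
    (hcap : ∀ v : Fin n → ℂ, A.mulVec v = 0 → B.mulVec v = 0 → v = 0)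
    (mA mB : ℝ)
    (hmA : IsLeast {r : ℝ | (∃ i, hA.1.eigenvalues i = r) ∧ r ≠ 0} mA)
    (hmB : IsLeast {r : ℝ | (∃ i, hB.1.eigenvalues i = r) ∧ r ≠ 0} mB)
    (c : ℝ)
    (hc : IsGreatest {r : ℝ | ∃ ξ η : Fin n → ℂ,
        A.mulVec ξ = 0 ∧ B.mulVec η = 0 ∧
        star ξ ⬝ᵥ ξ = 1 ∧ star η ⬝ᵥ η = 1 ∧
        ‖star ξ ⬝ᵥ η‖ = r} c) :
    ∀ ψ : Fin n → ℂ,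
      min mA mB * (1 - c) * (star ψ ⬝ᵥ ψ).re ≤ (star ψ ⬝ᵥ (A + B).mulVec ψ).re :=
  stmt1_general n A B hA hB mA mB hmA hmB c hc
end

section
/- Let T ≥ 1 and d ≥ 1, let U_1, …, U_T be unitary d×d complex matrices, let a_0,…,a_T be real numbers and b_0,…,b_{T−1} complex numbers, and define H_prop := Σ_{t=0}^T a_t |t⟩⟨t|⊗I_d + Σ_{t=0}^{T−1} ( b_t |t+1⟩⟨t| ⊗ U_{t+1} + conj(b_t) |t⟩⟨t+1| ⊗ U_{t+1}^† ) on ℂ^{T+1}⊗ℂ^d and H_clock := Σ_{t=0}^T a_t |t⟩⟨t| + Σ_{t=0}^{T−1} ( b_t |t+1⟩⟨t| + conj(b_t) |t⟩⟨t+1| ) on ℂ^{T+1}. Then for any orthogonal projections Π_in, Π_out on ℂ^d: (i) the smallest eigenvalue of H_prop equals the smallest eigenvalue of H_clock, and (ii) the smallest eigenvalue of H_prop + |0⟩⟨0|⊗Π_in + |T⟩⟨T|⊗Π_out is at most the smallest eigenvalue of H_clock + |0⟩⟨0| + |T⟩⟨T|. -/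
open Matrix Kronecker

/-!
Conjugating by the block-diagonal unitary `W = ∑ₜ |t⟩⟨t| ⊗ Uₜ ⋯ U₁` removes the gates:
`Wᴴ H_prop W = H_clock ⊗ I`. Unitary conjugation preserves the spectrum and, for `d ≥ 1`,
`A ⊗ I` has the same spectrum as `A`, which gives (i). The same conjugation sends the penalties
to `|0⟩⟨0| ⊗ Π_in` and `|T⟩⟨T| ⊗ (U_T ⋯ U₁)ᴴ Π_out (U_T ⋯ U₁)`, each below the corresponding
`|t⟩⟨t| ⊗ I` in the Loewner order, so the penalized operator is dominated by
`(H_clock + |0⟩⟨0| + |T⟩⟨T|) ⊗ I`; the smallest eigenvalue is monotone for that order.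
-/

open scoped MatrixOrder

namespace Matrix

section Spectrum

variable {𝕜 n : Type*} [RCLike 𝕜] [Fintype n] [DecidableEq n]

lemma IsHermitian.iInf_eigenvalues_eq_sInf_spectrum {A : Matrix n n 𝕜} (hA : A.IsHermitian) :
    ⨅ i, hA.eigenvalues i = sInf (spectrum ℝ A) := by
  rw [hA.spectrum_real_eq_range_eigenvalues, sInf_range]

lemma IsHermitian.algebraMap_sInf_spectrum_le {A : Matrix n n 𝕜} (hA : A.IsHermitian) :
    algebraMap ℝ _ (sInf (spectrum ℝ A)) ≤ A :=
  (algebraMap_le_iff_le_spectrum (ha := hA.isSelfAdjoint)).2 fun _ hx =>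
    csInf_le finite_real_spectrum.bddBelow hx

lemma sInf_spectrum_mono [Nonempty n] {A B : Matrix n n 𝕜} (hA : A.IsHermitian)
    (hB : B.IsHermitian) (hAB : A ≤ B) : sInf (spectrum ℝ A) ≤ sInf (spectrum ℝ B) := by
  have hne : (spectrum ℝ B).Nonempty := by
    rw [hB.spectrum_real_eq_range_eigenvalues]
    exact Set.range_nonempty _
  exact le_csInf hne <| (algebraMap_le_iff_le_spectrum (ha := hB.isSelfAdjoint)).1
    (hA.algebraMap_sInf_spectrum_le.trans hAB)

lemma spectrum_conjTranspose_mul_mul_of_mem_unitaryGroup {A W : Matrix n n 𝕜}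
    (hW : W ∈ unitaryGroup n 𝕜) : spectrum ℝ (Wᴴ * A * W) = spectrum ℝ A :=
  Unitary.spectrum_star_left_conjugate (U := ⟨W, hW⟩)

end Spectrum

section Kronecker

variable {R l n m : Type*}

lemma sum_kronecker_s4 [CommSemiring R] {κ p q : Type*} (s : Finset κ) (A : κ → Matrix l n R)
    (B : Matrix p q R) : (∑ k ∈ s, A k) ⊗ₖ B = ∑ k ∈ s, A k ⊗ₖ B := by
  ext
  simp [sum_apply, Finset.sum_mul]

variable [Fintype n] [DecidableEq n] [Fintype m] [DecidableEq m]

lemma isUnit_kronecker_one_iff [CommRing R] [Nonempty m] (A : Matrix n n R) :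
    IsUnit (A ⊗ₖ (1 : Matrix m m R)) ↔ IsUnit A := by
  rw [isUnit_iff_isUnit_det, isUnit_iff_isUnit_det, det_kronecker, det_one, one_pow, mul_one,
    isUnit_pow_iff Fintype.card_ne_zero]

lemma spectrum_kronecker_one {S : Type*} [CommSemiring S] [CommRing R] [Algebra S R]
    [Nonempty m] (A : Matrix n n R) :
    spectrum S (A ⊗ₖ (1 : Matrix m m R)) = spectrum S A := by
  ext r
  have h : algebraMap S _ r - A ⊗ₖ (1 : Matrix m m R) = (algebraMap S _ r - A) ⊗ₖ 1 := by
    ext ⟨i, k⟩ ⟨j, l⟩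
    simp only [algebraMap_eq_diagonal, sub_apply, diagonal_apply, kronecker_apply, one_apply,
      Prod.mk.injEq]
    split_ifs <;> simp_all
  simp only [spectrum.mem_iff, h, isUnit_kronecker_one_iff]

end Kronecker

section Order

variable {𝕜 n m : Type*} [RCLike 𝕜]

lemma IsHermitian.kronecker {A : Matrix n n 𝕜} {B : Matrix m m 𝕜} (hA : A.IsHermitian)
    (hB : B.IsHermitian) : (A ⊗ₖ B).IsHermitian := by
  rw [IsHermitian, conjTranspose_kronecker, hA.eq, hB.eq]

lemma kronecker_le_kronecker_left [Finite n] [Finite m] {A : Matrix n n 𝕜}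
    {B C : Matrix m m 𝕜} (hA : 0 ≤ A) (hBC : B ≤ C) : A ⊗ₖ B ≤ A ⊗ₖ C := by
  have h : A ⊗ₖ C = A ⊗ₖ B + A ⊗ₖ (C - B) := by rw [← kronecker_add, add_sub_cancel]
  rw [le_iff, h, add_sub_cancel_left]
  exact hA.posSemidef.kronecker (le_iff.1 hBC)

end Order

section Controlled

variable {ι m α : Type*} [Fintype ι] [DecidableEq ι] [CommSemiring α]

/-- `∑ₜ |t⟩⟨t| ⊗ M t`, the block-diagonal matrix with diagonal blocks `M t`. -/
def controlled (M : ι → Matrix m m α) : Matrix (ι × m) (ι × m) α :=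
  ∑ t, single t t 1 ⊗ₖ M t

lemma controlled_one [DecidableEq m] : controlled (1 : ι → Matrix m m α) = 1 := by
  rw [controlled, ← one_kronecker_one, ← sum_single_one, sum_kronecker_s4]
  rfl

lemma conjTranspose_controlled [StarRing α] (M : ι → Matrix m m α) :
    (controlled M)ᴴ = controlled fun t => (M t)ᴴ := by
  simp [controlled, conjTranspose_sum, conjTranspose_kronecker]

variable [Fintype m]

lemma controlled_mul_single_kronecker (M : ι → Matrix m m α) (i j : ι) (c : α)
    (B : Matrix m m α) :
    controlled M * (single i j c ⊗ₖ B) = single i j c ⊗ₖ (M i * B) := by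
  rw [controlled, Finset.sum_mul, Finset.sum_eq_single i]
  · rw [← mul_kronecker_mul, single_mul_single_same, one_mul]
  · intro t _ hti
    rw [← mul_kronecker_mul, single_mul_single_of_ne (h := hti), zero_kronecker]
  · simp

lemma single_kronecker_mul_controlled (M : ι → Matrix m m α) (i j : ι) (c : α)
    (B : Matrix m m α) :
    (single i j c ⊗ₖ B) * controlled M = single i j c ⊗ₖ (B * M j) := by
  rw [controlled, Finset.mul_sum, Finset.sum_eq_single j]
  · rw [← mul_kronecker_mul, single_mul_single_same, mul_one]
  · intro t _ htj
    rw [← mul_kronecker_mul, single_mul_single_of_ne (h := htj.symm), zero_kronecker]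
  · simp

lemma conjTranspose_controlled_mul_single_kronecker_mul [StarRing α] (M : ι → Matrix m m α)
    (i j : ι) (c : α) (B : Matrix m m α) :
    (controlled M)ᴴ * (single i j c ⊗ₖ B) * controlled M
      = single i j c ⊗ₖ ((M i)ᴴ * B * M j) := by
  rw [conjTranspose_controlled, controlled_mul_single_kronecker,
    single_kronecker_mul_controlled]

lemma controlled_mul_controlled (M N : ι → Matrix m m α) :
    controlled M * controlled N = controlled (M * N) := by
  nth_rw 2 [controlled]
  simp_rw [Finset.mul_sum, controlled_mul_single_kronecker]
  rfl

end Controlled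

section Unitary

variable {ι m α : Type*} [Fintype ι] [DecidableEq ι] [Fintype m] [DecidableEq m] [CommRing α]
  [StarRing α]

lemma controlled_mem_unitaryGroup {M : ι → Matrix m m α}
    (hM : ∀ t, M t ∈ unitaryGroup m α) : controlled M ∈ unitaryGroup (ι × m) α := by
  rw [mem_unitaryGroup_iff', star_eq_conjTranspose, conjTranspose_controlled,
    controlled_mul_controlled, ← controlled_one]
  congr 1
  funext t
  exact mem_unitaryGroup_iff'.1 (hM t)

end Unitary

lemma isStarProjection_single_one {n α : Type*} [Fintype n] [DecidableEq n] [Semiring α]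
    [StarRing α] (i : n) : IsStarProjection (single i i (1 : α)) :=
  ⟨by rw [IsIdempotentElem, single_mul_single_same, mul_one],
    by rw [IsSelfAdjoint, star_eq_conjTranspose, conjTranspose_single, star_one]⟩

end Matrix

lemma IsStarProjection.star_mul_mul_le_one {R : Type*} [Ring R] [PartialOrder R] [StarRing R]
    [StarOrderedRing R] {p u : R} (hp : IsStarProjection p) (hu : u ∈ unitary R) :
    star u * p * u ≤ 1 := by
  simpa [Unitary.star_mul_self_of_mem hu] using star_left_conjugate_le_conjugate hp.le_one u

section CumulativeProd

variable {n : Type*} [Fintype n] [DecidableEq n]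

/-- `cumulativeProd U t = U t * ⋯ * U 1`. -/
def cumulativeProd {α : Type*} [Semiring α] (U : ℕ → Matrix n n α) : ℕ → Matrix n n α
  | 0 => 1
  | t + 1 => U (t + 1) * cumulativeProd U t

lemma cumulativeProd_zero {α : Type*} [Semiring α] (U : ℕ → Matrix n n α) :
    cumulativeProd U 0 = 1 := rfl

lemma cumulativeProd_mem_unitaryGroup {α : Type*} [CommRing α] [StarRing α]
    {U : ℕ → Matrix n n α} {T : ℕ} (hU : ∀ i, 1 ≤ i → i ≤ T → U i ∈ unitaryGroup n α) {t : ℕ}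
    (ht : t ≤ T) : cumulativeProd U t ∈ unitaryGroup n α := by
  induction t with
  | zero => exact one_mem _
  | succ t ih => exact mul_mem (hU (t + 1) (by omega) ht) (ih (by omega))

end CumulativeProd

section ClockFrame

variable {T d : ℕ} {U : ℕ → Matrix (Fin d) (Fin d) ℂ}

noncomputable def clockFrame (T : ℕ) (U : ℕ → Matrix (Fin d) (Fin d) ℂ) :
    Matrix (Fin (T + 1) × Fin d) (Fin (T + 1) × Fin d) ℂ :=
  controlled fun t : Fin (T + 1) => cumulativeProd U t

lemma clockFrame_mem_unitaryGroup (hU : ∀ i, 1 ≤ i → i ≤ T → U i ∈ unitaryGroup (Fin d) ℂ) :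
    clockFrame T U ∈ unitaryGroup _ ℂ :=
  controlled_mem_unitaryGroup fun t => cumulativeProd_mem_unitaryGroup hU t.is_le

lemma conjTranspose_clockFrame_mul_Hprop_mul (a : Fin (T + 1) → ℝ) (b : Fin T → ℂ)
    (hU : ∀ i, 1 ≤ i → i ≤ T → U i ∈ unitaryGroup (Fin d) ℂ) :
    (clockFrame T U)ᴴ * Hprop T d U a b * clockFrame T U = Hclock T a b ⊗ₖ 1 := by
  have hM (t : Fin (T + 1)) : (cumulativeProd U t)ᴴ * cumulativeProd U t = 1 :=
    mem_unitaryGroup_iff'.1 (cumulativeProd_mem_unitaryGroup hU t.is_le)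
  have hUt (t : Fin T) : (U (t + 1))ᴴ * U (t + 1) = 1 :=
    mem_unitaryGroup_iff'.1 (hU (t + 1) (by omega) t.isLt)
  have hfwd (t : Fin T) :
      (cumulativeProd U (t + 1))ᴴ * U (t + 1) * cumulativeProd U t = 1 := by
    rw [cumulativeProd, conjTranspose_mul, Matrix.mul_assoc, Matrix.mul_assoc,
      ← Matrix.mul_assoc (U _)ᴴ, hUt, Matrix.one_mul]
    exact hM t.castSucc
  have hbwd (t : Fin T) :
      (cumulativeProd U t)ᴴ * (U (t + 1))ᴴ * cumulativeProd U (t + 1) = 1 := by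
    rw [cumulativeProd, Matrix.mul_assoc, ← Matrix.mul_assoc (U _)ᴴ, hUt, Matrix.one_mul]
    exact hM t.castSucc
  simp only [clockFrame, Hprop, Hclock, Matrix.mul_add, Matrix.add_mul, Finset.mul_sum,
    Finset.sum_mul, Matrix.mul_smul, Matrix.smul_mul,
    conjTranspose_controlled_mul_single_kronecker_mul, add_kronecker, sum_kronecker_s4,
    smul_kronecker, Matrix.mul_one, hM, Fin.val_succ, Fin.val_castSucc, hfwd, hbwd]

lemma conjTranspose_clockFrame_mul_penalized_le (a : Fin (T + 1) → ℝ) (b : Fin T → ℂ)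
    (hU : ∀ i, 1 ≤ i → i ≤ T → U i ∈ unitaryGroup (Fin d) ℂ)
    {Pin Pout : Matrix (Fin d) (Fin d) ℂ} (hPin : IsStarProjection Pin)
    (hPout : IsStarProjection Pout) :
    (clockFrame T U)ᴴ * (Hprop T d U a b + single 0 0 1 ⊗ₖ Pin
        + single (Fin.last T) (Fin.last T) 1 ⊗ₖ Pout) * clockFrame T U
      ≤ (Hclock T a b + single 0 0 1 + single (Fin.last T) (Fin.last T) 1) ⊗ₖ 1 := by
  rw [Matrix.mul_add, Matrix.mul_add, Matrix.add_mul, Matrix.add_mul,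
    conjTranspose_clockFrame_mul_Hprop_mul a b hU, clockFrame,
    conjTranspose_controlled_mul_single_kronecker_mul,
    conjTranspose_controlled_mul_single_kronecker_mul, add_kronecker, add_kronecker,
    Fin.val_zero, Fin.val_last, cumulativeProd_zero, conjTranspose_one, Matrix.one_mul,
    Matrix.mul_one]
  gcongr
  · exact kronecker_le_kronecker_left (isStarProjection_single_one _).nonneg hPin.le_one
  · exact kronecker_le_kronecker_left (isStarProjection_single_one _).nonneg
      (hPout.star_mul_mul_le_one (cumulativeProd_mem_unitaryGroup hU le_rfl))
end ClockFrame

theorem stmt4_general (T d : ℕ) (hd : 1 ≤ d)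
    (U : ℕ → Matrix (Fin d) (Fin d) ℂ)
    (hU : ∀ i, 1 ≤ i → i ≤ T → U i ∈ Matrix.unitaryGroup (Fin d) ℂ)
    (a : Fin (T + 1) → ℝ) (b : Fin T → ℂ)
    (Pin Pout : Matrix (Fin d) (Fin d) ℂ)
    (hPin : Pin.IsHermitian) (hPin2 : Pin * Pin = Pin)
    (hPout : Pout.IsHermitian) (hPout2 : Pout * Pout = Pout)
    (h1 : (Hprop T d U a b).IsHermitian)
    (h2 : (Hclock T a b).IsHermitian)
    (h3 : (Hprop T d U a b
        + Matrix.single (0 : Fin (T + 1)) (0 : Fin (T + 1)) (1 : ℂ) ⊗ₖ Pin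
        + Matrix.single (Fin.last T) (Fin.last T) (1 : ℂ) ⊗ₖ Pout).IsHermitian)
    (h4 : (Hclock T a b
        + Matrix.single (0 : Fin (T + 1)) (0 : Fin (T + 1)) (1 : ℂ)
        + Matrix.single (Fin.last T) (Fin.last T) (1 : ℂ)).IsHermitian) :
    (⨅ i, h1.eigenvalues i) = (⨅ i, h2.eigenvalues i) ∧
    (⨅ i, h3.eigenvalues i) ≤ (⨅ i, h4.eigenvalues i) := by
  have : Nonempty (Fin d) := ⟨⟨0, hd⟩⟩
  have hW := clockFrame_mem_unitaryGroup hU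
  simp only [IsHermitian.iInf_eigenvalues_eq_sInf_spectrum]
  refine ⟨?_, ?_⟩
  · rw [← spectrum_conjTranspose_mul_mul_of_mem_unitaryGroup hW,
      conjTranspose_clockFrame_mul_Hprop_mul a b hU, spectrum_kronecker_one]
  · rw [← spectrum_conjTranspose_mul_mul_of_mem_unitaryGroup hW,
      ← spectrum_kronecker_one (m := Fin d) (Hclock T a b + _ + _)]
    exact sInf_spectrum_mono (isHermitian_conjTranspose_mul_mul _ h3)
      (h4.kronecker isHermitian_one)
      (conjTranspose_clockFrame_mul_penalized_le a b hU ⟨hPin2, hPin⟩ ⟨hPout2, hPout⟩)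

theorem stmt4 (T d : ℕ) (hT : 1 ≤ T) (hd : 1 ≤ d)
    (U : ℕ → Matrix (Fin d) (Fin d) ℂ)
    (hU : ∀ i, 1 ≤ i → i ≤ T → U i ∈ Matrix.unitaryGroup (Fin d) ℂ)
    (a : Fin (T + 1) → ℝ) (b : Fin T → ℂ)
    (Pin Pout : Matrix (Fin d) (Fin d) ℂ)
    (hPin : Pin.IsHermitian) (hPin2 : Pin * Pin = Pin)
    (hPout : Pout.IsHermitian) (hPout2 : Pout * Pout = Pout)
    (h1 : (Hprop T d U a b).IsHermitian)
    (h2 : (Hclock T a b).IsHermitian)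
    (h3 : (Hprop T d U a b
        + Matrix.single (0 : Fin (T + 1)) (0 : Fin (T + 1)) (1 : ℂ) ⊗ₖ Pin
        + Matrix.single (Fin.last T) (Fin.last T) (1 : ℂ) ⊗ₖ Pout).IsHermitian)
    (h4 : (Hclock T a b
        + Matrix.single (0 : Fin (T + 1)) (0 : Fin (T + 1)) (1 : ℂ)
        + Matrix.single (Fin.last T) (Fin.last T) (1 : ℂ)).IsHermitian) :
    (⨅ i, h1.eigenvalues i) = (⨅ i, h2.eigenvalues i) ∧
    (⨅ i, h3.eigenvalues i) ≤ (⨅ i, h4.eigenvalues i) :=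
  stmt4_general T d hd U hU a b Pin Pout hPin hPin2 hPout hPout2 h1 h2 h3 h4
end

section
/- There exists a constant c > 0 such that for every integer T ≥ 3 the following holds. Let M be the (T+1)×(T+1) real symmetric matrix with entries M_{0,0} = M_{T,T} = 1/(2(T−1)); M_{t,t} = 1/2 for 1 ≤ t ≤ T−1; M_{0,1} = M_{1,0} = M_{T−1,T} = M_{T,T−1} = −1/(2·√(2T−2)); M_{t,t+1} = M_{t+1,t} = −1/4 for 1 ≤ t ≤ T−2; and all other entries equal to 0. Then M is positive semidefinite, M v = 0 for the unit vector v with v_0 = v_T = 1/2 and v_t = 1/√(2(T−1)) for 1 ≤ t ≤ T−1, and the second-smallest eigenvalue of M (counted with multiplicity) is at least c/T². -/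
/-!
Write `π = v²` and `y = x / v`. The clock Hamiltonian is `(8 (T - 1))⁻¹ Bᵀ B`, where
`B x = (y_{i+1} - y_i)_{i < T}` is the discrete gradient of `y` along the path `0 — 1 — ⋯ — T`.
Hence `M` is positive semidefinite, `B v = 0`, and `x ⬝ M x = (8 (T - 1))⁻¹ ∑ (y_{i+1} - y_i)²`.
For `x ⊥ v` the function `y` has `π`-mean zero and `π`-second moment `‖x‖²`, so
`2 ‖x‖² = ∑_{a,b} π_a π_b (y_a - y_b)²`, and by Cauchy–Schwarz along the path every
`(y_a - y_b)²` is at most `T ∑ (y_{i+1} - y_i)²`. Together `x ⬝ M x ≥ ‖x‖² / (4 T (T - 1))`.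
-/

open Matrix Finset

theorem sum_sum_mul_mul_sub_sq {ι : Type*} (s : Finset ι) (p y : ι → ℝ) :
    ∑ a ∈ s, ∑ b ∈ s, p a * p b * (y a - y b) ^ 2 =
      2 * (∑ i ∈ s, p i) * (∑ i ∈ s, p i * y i ^ 2) - 2 * (∑ i ∈ s, p i * y i) ^ 2 := by
  have h : ∀ a b, p a * p b * (y a - y b) ^ 2 =
      p b * (p a * y a ^ 2) + p a * (p b * y b ^ 2) - 2 * (p a * y a) * (p b * y b) :=
    fun a b => by ring
  simp only [h, sum_add_distrib, sum_sub_distrib, ← mul_sum, ← sum_mul]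
  ring

theorem two_mul_sum_mul_sq_le_of_sq_sub_le {ι : Type*} (s : Finset ι) (p y : ι → ℝ)
    (hp : ∀ i ∈ s, 0 ≤ p i) (hp1 : ∑ i ∈ s, p i = 1) (hy : ∑ i ∈ s, p i * y i = 0) {K : ℝ}
    (hK : ∀ a ∈ s, ∀ b ∈ s, (y a - y b) ^ 2 ≤ K) :
    2 * ∑ i ∈ s, p i * y i ^ 2 ≤ K := by
  calc 2 * ∑ i ∈ s, p i * y i ^ 2
      = ∑ a ∈ s, ∑ b ∈ s, p a * p b * (y a - y b) ^ 2 := by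
        rw [sum_sum_mul_mul_sub_sq, hp1, hy]; ring
    _ ≤ ∑ a ∈ s, ∑ b ∈ s, p a * p b * K := by
        gcongr with a ha b hb
        · exact mul_nonneg (hp a ha) (hp b hb)
        · exact hK a ha b hb
    _ = K := by simp [← sum_mul, ← mul_sum, hp1]

theorem sq_sub_le_mul_sum_range_sq_sub (y : ℕ → ℝ) {a b n : ℕ} (hab : a ≤ b) (hb : b ≤ n) :
    (y b - y a) ^ 2 ≤ n * ∑ i ∈ range n, (y (i + 1) - y i) ^ 2 := by
  have htelescope : ∑ i ∈ Ico a b, (y (i + 1) - y i) = y b - y a := by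
    rw [sum_Ico_eq_sub _ hab, sum_range_sub, sum_range_sub]; ring
  calc (y b - y a) ^ 2 ≤ #(Ico a b) * ∑ i ∈ Ico a b, (y (i + 1) - y i) ^ 2 := by
        rw [← htelescope]; exact sq_sum_le_card_mul_sum_sq
    _ ≤ n * ∑ i ∈ range n, (y (i + 1) - y i) ^ 2 := by
        gcongr ?_ * ?_
        · rw [Nat.card_Ico]; exact_mod_cast (by omega : b - a ≤ n)
        · exact sum_le_sum_of_subset_of_nonneg (fun i hi => by simp at hi ⊢; omega)
            fun _ _ _ => sq_nonneg _

theorem sq_sub_le_mul_sum_sq_succ_sub_castSucc {n : ℕ} (y : Fin (n + 1) → ℝ)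
    (a b : Fin (n + 1)) :
    (y a - y b) ^ 2 ≤ n * ∑ i : Fin n, (y i.succ - y i.castSucc) ^ 2 := by
  set z : ℕ → ℝ := fun j => y (Fin.ofNat (n + 1) j)
  have hz (t : Fin (n + 1)) : y t = z t := by simp [z]
  have hsum : ∑ i : Fin n, (y i.succ - y i.castSucc) ^ 2 =
      ∑ i ∈ range n, (z (i + 1) - z i) ^ 2 := by
    simp only [hz, Fin.val_succ, Fin.val_castSucc]
    exact Fin.sum_univ_eq_sum_range (fun i => (z (i + 1) - z i) ^ 2) n
  rw [hsum, hz a, hz b]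
  rcases le_total a b with h | h
  · rw [← neg_sub, neg_sq]
    exact sq_sub_le_mul_sum_range_sq_sub z h (by omega)
  · exact sq_sub_le_mul_sum_range_sq_sub z h (by omega)

def pathDiff (n : ℕ) : Matrix (Fin n) (Fin (n + 1)) ℝ :=
  of fun i => Pi.single i.succ 1 - Pi.single i.castSucc 1

lemma pathDiff_mulVec {n : ℕ} (y : Fin (n + 1) → ℝ) (i : Fin n) :
    (pathDiff n *ᵥ y) i = y i.succ - y i.castSucc := by
  change (Pi.single i.succ 1 - Pi.single i.castSucc 1) ⬝ᵥ y = _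
  simp [sub_dotProduct]

lemma pathDiff_apply {n : ℕ} (i : Fin n) (t : Fin (n + 1)) :
    pathDiff n i t = (if t.val = i.val + 1 then 1 else 0) - if t.val = i.val then 1 else 0 := by
  simp [pathDiff, Pi.single_apply, Fin.ext_iff]

/- The right side is a sum of spikes in `i`, so its sum over `i` can be read off. -/
lemma ite_sub_ite_mul_ite_sub_ite (i a b : ℕ) :
    ((if a = i + 1 then (1 : ℝ) else 0) - if a = i then 1 else 0) *
      ((if b = i + 1 then 1 else 0) - if b = i then 1 else 0) =
    (if i = a then (if a = b then 1 else 0) else 0)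
      + (if i = a - 1 then (if 0 < a ∧ a = b then 1 else 0) else 0)
      - (if i = a then (if a + 1 = b then 1 else 0) else 0)
      - (if i = b then (if b + 1 = a then 1 else 0) else 0) := by
  split_ifs <;> first | omega | norm_num

lemma pathDiff_transpose_mul_self_apply {n : ℕ} (t t' : Fin (n + 1)) :
    ((pathDiff n)ᵀ * pathDiff n) t t' =
      if t = t' then (if 0 < t.val then 1 else 0) + (if t.val < n then 1 else 0)
      else if t.val + 1 = t'.val ∨ t'.val + 1 = t.val then -1 else 0 := by
  simp only [mul_apply, transpose_apply, pathDiff_apply]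
  rw [Fin.sum_univ_eq_sum_range (fun i => ((if (t : ℕ) = i + 1 then (1 : ℝ) else 0) -
      if (t : ℕ) = i then 1 else 0) * ((if (t' : ℕ) = i + 1 then 1 else 0) -
      if (t' : ℕ) = i then 1 else 0))]
  simp only [ite_sub_ite_mul_ite_sub_ite, sum_add_distrib, sum_sub_distrib, sum_ite_eq',
    mem_range, Fin.ext_iff]
  have := t.isLt
  have := t'.isLt
  split_ifs <;> first | omega | norm_num

noncomputable def pathHamiltonian {n : ℕ} (u : Fin (n + 1) → ℝ) :
    Matrix (Fin (n + 1)) (Fin (n + 1)) ℝ :=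
  (pathDiff n * diagonal u⁻¹)ᵀ * (pathDiff n * diagonal u⁻¹)

section pathHamiltonian

variable {n : ℕ} (u : Fin (n + 1) → ℝ)

lemma pathHamiltonian_apply (t t' : Fin (n + 1)) :
    pathHamiltonian u t t' = (u t)⁻¹ * ((pathDiff n)ᵀ * pathDiff n) t t' * (u t')⁻¹ := by
  rw [pathHamiltonian, transpose_mul, diagonal_transpose, ← Matrix.mul_assoc, mul_diagonal,
    Matrix.mul_assoc, diagonal_mul, Pi.inv_apply, Pi.inv_apply]

lemma posSemidef_pathHamiltonian : (pathHamiltonian u).PosSemidef := by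
  simpa [pathHamiltonian, conjTranspose_eq_transpose_of_trivial] using
    posSemidef_conjTranspose_mul_self (pathDiff n * diagonal u⁻¹)

lemma pathHamiltonian_mulVec_self (hu : ∀ t, u t ≠ 0) : pathHamiltonian u *ᵥ u = 0 := by
  have hgrad : (pathDiff n * diagonal u⁻¹) *ᵥ u = 0 := by
    ext i
    simp [← mulVec_mulVec, mulVec_diagonal, pathDiff_mulVec, hu]
  rw [pathHamiltonian, ← mulVec_mulVec, hgrad, mulVec_zero]

lemma dotProduct_pathHamiltonian_mulVec (x : Fin (n + 1) → ℝ) :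
    x ⬝ᵥ pathHamiltonian u *ᵥ x = ∑ i : Fin n, ((x / u) i.succ - (x / u) i.castSucc) ^ 2 := by
  have hdiv : diagonal u⁻¹ *ᵥ x = x / u := by
    ext t; simp [mulVec_diagonal, div_eq_inv_mul]
  rw [pathHamiltonian, ← mulVec_mulVec, dotProduct_mulVec, vecMul_transpose, ← mulVec_mulVec,
    hdiv]
  simp [dotProduct, pathDiff_mulVec, sq]

theorem two_mul_dotProduct_self_le_pathHamiltonian (hu : ∀ t, u t ≠ 0) (hnorm : u ⬝ᵥ u = 1)
    {x : Fin (n + 1) → ℝ} (hx : u ⬝ᵥ x = 0) :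
    2 * (x ⬝ᵥ x) ≤ n * (x ⬝ᵥ pathHamiltonian u *ᵥ x) := by
  have hxy (t : Fin (n + 1)) : x t = u t * (x / u) t := by
    rw [Pi.div_apply, mul_div_cancel₀ _ (hu t)]
  have hsecond : x ⬝ᵥ x = ∑ t, u t ^ 2 * (x / u) t ^ 2 := by
    simp only [dotProduct]; congr! 1 with t; rw [hxy t]; ring
  have hmean : ∑ t, u t ^ 2 * (x / u) t = 0 := by
    rw [← hx]; simp only [dotProduct]; congr! 1 with t; rw [hxy t]; ring
  have hmass : ∑ t, u t ^ 2 = 1 := by simpa [dotProduct, sq] using hnorm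
  rw [hsecond, dotProduct_pathHamiltonian_mulVec]
  exact two_mul_sum_mul_sq_le_of_sq_sub_le univ _ _ (fun t _ => sq_nonneg (u t)) hmass hmean
    fun a _ b _ => sq_sub_le_mul_sum_sq_succ_sub_castSucc _ a b

end pathHamiltonian

noncomputable def clockAmplitude (T : ℕ) (t : Fin (T + 1)) : ℝ :=
  if t.val = 0 ∨ t.val = T then 1 / 2 else 1 / Real.sqrt (2 * ((T : ℝ) - 1))

noncomputable def clockMatrix (T : ℕ) : Matrix (Fin (T + 1)) (Fin (T + 1)) ℝ :=
  of fun t t' =>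
    if t = t' then
      (if t.val = 0 ∨ t.val = T then 1 / (2 * ((T : ℝ) - 1)) else 1 / 2)
    else if t.val + 1 = t'.val ∨ t'.val + 1 = t.val then
      (if t.val = 0 ∨ t'.val = 0 ∨ t.val = T ∨ t'.val = T then
        -(1 / (2 * Real.sqrt (2 * (T : ℝ) - 2)))
      else -(1 / 4))
    else 0

section clock

variable {T : ℕ}

lemma clockAmplitude_inv (t : Fin (T + 1)) :
    (clockAmplitude T t)⁻¹ =
      if t.val = 0 ∨ t.val = T then 2 else Real.sqrt (2 * (T : ℝ) - 2) := by
  rw [clockAmplitude, apply_ite (·⁻¹), mul_sub, mul_one]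
  norm_num

lemma clockAmplitude_pos (hT : 2 ≤ T) (t : Fin (T + 1)) : 0 < clockAmplitude T t := by
  have : (2 : ℝ) ≤ T := by exact_mod_cast hT
  rw [← inv_pos, clockAmplitude_inv]
  split_ifs
  · norm_num
  · exact Real.sqrt_pos.2 (by linarith)

lemma dotProduct_self_clockAmplitude (hT : 2 ≤ T) :
    clockAmplitude T ⬝ᵥ clockAmplitude T = 1 := by
  obtain ⟨m, rfl⟩ : ∃ m, T = m + 1 + 1 := ⟨T - 2, by omega⟩
  have hinterior (i : Fin (m + 1)) : clockAmplitude (m + 1 + 1) i.castSucc.succ =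
      1 / Real.sqrt (2 * (((m + 1 + 1 : ℕ) : ℝ) - 1)) :=
    if_neg (by simp; omega)
  have hs : Real.sqrt (2 * (((m + 1 + 1 : ℕ) : ℝ) - 1)) ^ 2 = 2 * (m + 1) := by
    rw [Real.sq_sqrt (by push_cast; linarith)]; push_cast; ring
  rw [dotProduct, Fin.sum_univ_succ, Fin.sum_univ_castSucc]
  simp only [hinterior, sum_const, card_univ, Fintype.card_fin, nsmul_eq_mul]
  simp only [clockAmplitude, Fin.val_zero, Fin.val_succ, Fin.val_last]
  generalize Real.sqrt _ = s at hs ⊢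
  have : s ≠ 0 := by rintro rfl; simp at hs; linarith
  norm_num
  field_simp
  linear_combination (-2) * hs

lemma clockMatrix_eq_smul_pathHamiltonian (hT : 2 ≤ T) :
    clockMatrix T = (8 * ((T : ℝ) - 1))⁻¹ • pathHamiltonian (clockAmplitude T) := by
  have hT' : (2 : ℝ) ≤ T := by exact_mod_cast hT
  have hT1 : (T : ℝ) - 1 ≠ 0 := by linarith
  have hs : Real.sqrt (2 * T - 2) ^ 2 = 2 * T - 2 := Real.sq_sqrt (by linarith)
  have hs0 : Real.sqrt (2 * T - 2) ≠ 0 := (Real.sqrt_pos.2 (by linarith)).ne'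
  ext t t'
  rw [clockMatrix, of_apply, Matrix.smul_apply, pathHamiltonian_apply,
    pathDiff_transpose_mul_self_apply, clockAmplitude_inv, clockAmplitude_inv, smul_eq_mul]
  have := t.isLt
  have := t'.isLt
  simp only [Fin.ext_iff]
  generalize Real.sqrt (2 * T - 2) = s at *
  split_ifs <;> first | omega | (field_simp; nlinarith)

lemma posSemidef_clockMatrix (hT : 2 ≤ T) : (clockMatrix T).PosSemidef := by
  have : (2 : ℝ) ≤ T := by exact_mod_cast hT
  rw [clockMatrix_eq_smul_pathHamiltonian hT]
  exact (posSemidef_pathHamiltonian _).smul (inv_nonneg.2 (by linarith))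

lemma clockMatrix_mulVec_clockAmplitude (hT : 2 ≤ T) :
    clockMatrix T *ᵥ clockAmplitude T = 0 := by
  rw [clockMatrix_eq_smul_pathHamiltonian hT, Matrix.smul_mulVec,
    pathHamiltonian_mulVec_self _ fun t => (clockAmplitude_pos hT t).ne', smul_zero]

theorem div_sq_mul_dotProduct_self_le_clockMatrix (hT : 2 ≤ T) {x : Fin (T + 1) → ℝ}
    (hx : clockAmplitude T ⬝ᵥ x = 0) :
    1 / 4 / (T : ℝ) ^ 2 * (x ⬝ᵥ x) ≤ x ⬝ᵥ clockMatrix T *ᵥ x := by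
  have hT' : (2 : ℝ) ≤ T := by exact_mod_cast hT
  have hgap := two_mul_dotProduct_self_le_pathHamiltonian _
    (fun t => (clockAmplitude_pos hT t).ne') (dotProduct_self_clockAmplitude hT) hx
  have hx0 : 0 ≤ x ⬝ᵥ x := sum_nonneg fun t _ => mul_self_nonneg (x t)
  have hcoef : 1 / 4 / (T : ℝ) ^ 2 ≤ (8 * ((T : ℝ) - 1))⁻¹ * (2 / T) := by
    rw [div_div, ← div_eq_inv_mul, div_div, div_le_div_iff₀ (by positivity) (by nlinarith)]
    nlinarith
  rw [clockMatrix_eq_smul_pathHamiltonian hT, Matrix.smul_mulVec, dotProduct_smul, smul_eq_mul]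
  calc 1 / 4 / (T : ℝ) ^ 2 * (x ⬝ᵥ x) ≤ (8 * ((T : ℝ) - 1))⁻¹ * (2 / T) * (x ⬝ᵥ x) :=
        mul_le_mul_of_nonneg_right hcoef hx0
    _ = (8 * ((T : ℝ) - 1))⁻¹ * (2 * (x ⬝ᵥ x) / T) := by ring
    _ ≤ _ := mul_le_mul_of_nonneg_left ((div_le_iff₀' (by positivity)).2 hgap)
        (inv_nonneg.2 (by linarith))

end clock

theorem stmt6 :
    ∃ c : ℝ, 0 < c ∧ ∀ T : ℕ, 3 ≤ T →
      ∀ M : Matrix (Fin (T + 1)) (Fin (T + 1)) ℝ,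
      (∀ t t' : Fin (T + 1), M t t' =
        if t = t' then
          (if t.val = 0 ∨ t.val = T then 1 / (2 * ((T : ℝ) - 1)) else 1 / 2)
        else if t.val + 1 = t'.val ∨ t'.val + 1 = t.val then
          (if t.val = 0 ∨ t'.val = 0 ∨ t.val = T ∨ t'.val = T then
            -(1 / (2 * Real.sqrt (2 * (T : ℝ) - 2)))
          else -(1 / 4))
        else 0) →
      M.PosSemidef ∧
      (let v : Fin (T + 1) → ℝ := fun t =>
        if t.val = 0 ∨ t.val = T then 1 / 2 else 1 / Real.sqrt (2 * ((T : ℝ) - 1))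
       v ⬝ᵥ v = 1 ∧ M.mulVec v = 0 ∧
       ∀ x : Fin (T + 1) → ℝ, v ⬝ᵥ x = 0 →
         c / (T : ℝ) ^ 2 * (x ⬝ᵥ x) ≤ x ⬝ᵥ M.mulVec x) := by
  refine ⟨1 / 4, by norm_num, fun T hT M hM => ?_⟩
  have hT2 : 2 ≤ T := by omega
  obtain rfl : M = clockMatrix T := Matrix.ext hM
  exact ⟨posSemidef_clockMatrix hT2, dotProduct_self_clockAmplitude hT2,
    clockMatrix_mulVec_clockAmplitude hT2,
    fun x hx => div_sq_mul_dotProduct_self_le_clockMatrix hT2 hx⟩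
end

section
/- Let H_0 and B be Hermitian n×n complex matrices with B positive semidefinite. Suppose the second-smallest eigenvalue of H_0 (eigenvalues counted with multiplicity in nondecreasing order) is at least 1, and suppose there exists a unit vector φ with Bφ = 0 and ⟨φ, H_0 φ⟩ ≤ 3/4. Then for every real s ≥ 0, writing λ_0(s) ≤ λ_1(s) for the two smallest eigenvalues (with multiplicity) of H_0 + sB, one has λ_1(s) − λ_0(s) ≥ 1/4. -/
/-!
Counting form of Weyl monotonicity: if `T ≤ S` in the Loewner order, then `S` has at most as many
eigenvalues below `c` as `T`. Otherwise the span of the eigenvectors of `S` with eigenvalue `< c`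
and the span of those of `T` with eigenvalue `≥ c` would have total dimension exceeding that of
the space, hence meet in some `x ≠ 0`, for which `c ‖x‖² ≤ ⟪x, T x⟫ ≤ ⟪x, S x⟫ < c ‖x‖²`.
With `T = H₀ ≤ H₀ + s B = S` and `c = 1`, at most one eigenvalue of `H₀ + s B` lies below `1`,
while the trial state `φ` gives `λ₀(s) ≤ ⟪φ, H₀ φ⟫ ≤ 3/4`, so `λ₀(s) + 1/4 ≤ 1`.
-/

open Matrix ComplexOrder Module Submodule RCLike
open scoped InnerProductSpace

namespace OrthonormalBasis

variable {𝕜 E ι : Type*} [RCLike 𝕜] [NormedAddCommGroup E] [InnerProductSpace 𝕜 E] [Fintype ι]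
  (b : OrthonormalBasis ι 𝕜 E) {T : E →ₗ[𝕜] E} {μ : ι → ℝ}

theorem re_inner_map_eq_sum_eigenvalues (hb : ∀ i, T (b i) = (μ i : 𝕜) • b i) (x : E) :
    re ⟪x, T x⟫_𝕜 = ∑ i, μ i * ‖⟪b i, x⟫_𝕜‖ ^ 2 := by
  have hTx : T x = ∑ i, ((μ i : 𝕜) * ⟪b i, x⟫_𝕜) • b i := by
    conv_lhs => rw [← b.sum_repr' x]
    simp only [map_sum, map_smul, hb, smul_smul, mul_comm]
  rw [hTx, inner_sum, map_sum]
  refine Finset.sum_congr rfl fun i _ => ?_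
  rw [inner_smul_right, ← inner_conj_symm (b i) x, mul_assoc, RCLike.conj_mul, ← ofReal_pow,
    ← ofReal_mul, ofReal_re, RCLike.norm_conj]

theorem mul_norm_sq_le_re_inner_map (hb : ∀ i, T (b i) = (μ i : 𝕜) • b i) {c : ℝ} {x : E}
    (hx : ∀ i, μ i < c → ⟪b i, x⟫_𝕜 = 0) : c * ‖x‖ ^ 2 ≤ re ⟪x, T x⟫_𝕜 := by
  rw [b.re_inner_map_eq_sum_eigenvalues hb, ← b.sum_sq_norm_inner_right, Finset.mul_sum]
  refine Finset.sum_le_sum fun i _ => ?_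
  by_cases hi : μ i < c
  · simp [hx i hi]
  · exact mul_le_mul_of_nonneg_right (not_lt.mp hi) (sq_nonneg _)

theorem re_inner_map_lt_mul_norm_sq (hb : ∀ i, T (b i) = (μ i : 𝕜) • b i) {c : ℝ} {x : E}
    (hx0 : x ≠ 0) (hx : ∀ i, c ≤ μ i → ⟪b i, x⟫_𝕜 = 0) : re ⟪x, T x⟫_𝕜 < c * ‖x‖ ^ 2 := by
  rw [b.re_inner_map_eq_sum_eigenvalues hb, ← b.sum_sq_norm_inner_right, Finset.mul_sum]
  obtain ⟨j, hj⟩ : ∃ j, ⟪b j, x⟫_𝕜 ≠ 0 := by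
    by_contra! h
    exact hx0 (by simpa [h] using (b.sum_repr' x).symm)
  refine Finset.sum_lt_sum (fun i _ => ?_) ⟨j, Finset.mem_univ j, ?_⟩
  · by_cases hi : c ≤ μ i
    · simp [hx i hi]
    · exact mul_le_mul_of_nonneg_right (not_le.mp hi).le (sq_nonneg _)
  · have hμ : μ j < c := not_le.mp fun h => hj (hx j h)
    exact mul_lt_mul_of_pos_right hμ (by positivity)

theorem iInf_mul_norm_sq_le_re_inner_map (hb : ∀ i, T (b i) = (μ i : 𝕜) • b i) (x : E) :
    (⨅ i, μ i) * ‖x‖ ^ 2 ≤ re ⟪x, T x⟫_𝕜 :=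
  b.mul_norm_sq_le_re_inner_map hb fun i hi =>
    absurd hi (ciInf_le (Set.finite_range μ).bddBelow i).not_gt

theorem inner_eq_zero_of_mem_span_image {s : Set ι} {x : E} (hx : x ∈ span 𝕜 (b '' s)) {i : ι}
    (hi : i ∉ s) : ⟪b i, x⟫_𝕜 = 0 := by
  have : span 𝕜 (b '' s) ≤ (𝕜 ∙ b i)ᗮ := by
    rw [span_le]
    rintro _ ⟨j, hj, rfl⟩
    rw [SetLike.mem_coe, mem_orthogonal_singleton_iff_inner_right]
    exact b.orthonormal.2 (fun h => hi (h ▸ hj))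
  exact (mem_orthogonal_singleton_iff_inner_right).mp (this hx)

theorem finrank_span_image (s : Finset ι) : finrank 𝕜 (span 𝕜 (b '' s)) = s.card := by
  rw [Set.image_eq_range]
  exact (finrank_span_eq_card (b.orthonormal.linearIndependent.comp _ Subtype.val_injective)).trans
    (Fintype.card_coe s)

end OrthonormalBasis

namespace LinearMap

variable {𝕜 E ι κ : Type*} [RCLike 𝕜] [NormedAddCommGroup E] [InnerProductSpace 𝕜 E]
  [Fintype ι] [Fintype κ]

theorem re_inner_map_le_of_le {T S : E →ₗ[𝕜] E} (hTS : T ≤ S) (x : E) :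
    re ⟪x, T x⟫_𝕜 ≤ re ⟪x, S x⟫_𝕜 := by
  have := ((le_def T S).mp hTS).re_inner_nonneg_right x
  rwa [sub_apply, inner_sub_right, map_sub, sub_nonneg] at this

theorem card_eigenvalues_lt_le_of_le {T S : E →ₗ[𝕜] E} (hTS : T ≤ S)
    {bT : OrthonormalBasis ι 𝕜 E} {μ : ι → ℝ} (hT : ∀ i, T (bT i) = (μ i : 𝕜) • bT i)
    {bS : OrthonormalBasis κ 𝕜 E} {ν : κ → ℝ} (hS : ∀ k, S (bS k) = (ν k : 𝕜) • bS k) (c : ℝ) :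
    (Finset.univ.filter fun k => ν k < c).card ≤ (Finset.univ.filter fun i => μ i < c).card := by
  have := Module.Finite.of_basis bT.toBasis
  set U := span 𝕜 (bS '' (Finset.univ.filter fun k => ν k < c))
  set W := span 𝕜 (bT '' (Finset.univ.filter fun i => ¬ μ i < c))
  by_contra! hcard
  have hdim : finrank 𝕜 E < finrank 𝕜 U + finrank 𝕜 W := by
    rw [bS.finrank_span_image, bT.finrank_span_image, finrank_eq_card_basis bT.toBasis,
      ← Finset.card_univ, ← Finset.card_filter_add_card_filter_not (fun i => μ i < c)]
    omega
  obtain ⟨x, hxU, hxW, hx0⟩ : ∃ x ∈ U, x ∈ W ∧ x ≠ 0 := by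
    by_contra! h
    exact hdim.not_ge (finrank_add_finrank_le_of_disjoint (disjoint_def.mpr h))
  have hS_lt := bS.re_inner_map_lt_mul_norm_sq hS hx0 fun k hk =>
    bS.inner_eq_zero_of_mem_span_image hxU (by simpa using hk)
  have hT_ge := bT.mul_norm_sq_le_re_inner_map hT fun i hi =>
    bT.inner_eq_zero_of_mem_span_image hxW (by simpa using hi)
  linarith [re_inner_map_le_of_le hTS x]

end LinearMap

namespace Matrix.IsHermitian

variable {𝕜 n : Type*} [RCLike 𝕜] [Fintype n] [DecidableEq n] {A B : Matrix n n 𝕜}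

theorem toEuclideanLin_eigenvectorBasis_s7 (hA : A.IsHermitian) (i : n) :
    toEuclideanLin A (hA.eigenvectorBasis i) = (hA.eigenvalues i : 𝕜) • hA.eigenvectorBasis i := by
  ext1 j
  rw [ofLp_toLpLin, toLin'_apply, hA.mulVec_eigenvectorBasis]
  simp [RCLike.real_smul_eq_coe_mul]

theorem card_eigenvalues_lt_le_of_posSemidef_sub (hA : A.IsHermitian) (hB : B.IsHermitian)
    (hAB : (B - A).PosSemidef) (c : ℝ) :
    (Finset.univ.filter fun i => hB.eigenvalues i < c).card ≤
      (Finset.univ.filter fun i => hA.eigenvalues i < c).card :=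
  LinearMap.card_eigenvalues_lt_le_of_le
    (by rwa [LinearMap.le_def, ← map_sub, isPositive_toEuclideanLin_iff])
    hA.toEuclideanLin_eigenvectorBasis_s7 hB.toEuclideanLin_eigenvectorBasis_s7 c

theorem iInf_eigenvalues_le_re_dotProduct (hA : A.IsHermitian) {v : n → 𝕜}
    (hv : star v ⬝ᵥ v = 1) : ⨅ i, hA.eigenvalues i ≤ re (star v ⬝ᵥ A *ᵥ v) := by
  have h := hA.eigenvectorBasis.iInf_mul_norm_sq_le_re_inner_map
    hA.toEuclideanLin_eigenvectorBasis_s7 (WithLp.toLp 2 v)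
  have hnorm : ‖WithLp.toLp 2 v‖ ^ 2 = 1 := by
    rw [← inner_self_eq_norm_sq (𝕜 := 𝕜), EuclideanSpace.inner_toLp_toLp, dotProduct_comm, hv,
      one_re]
  rwa [hnorm, mul_one, EuclideanSpace.inner_toLp_toLp, dotProduct_comm] at h

end Matrix.IsHermitian

theorem stmt7_general (n : ℕ)
    (H0 B : Matrix (Fin n) (Fin n) ℂ)
    (hH0 : H0.IsHermitian) (hB : B.PosSemidef)
    -- the second-smallest eigenvalue of `H0` (with multiplicity) is at least 1,
    -- i.e. at most one eigenvalue of `H0` is `< 1`: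
    (h2 : (Finset.univ.filter fun i => hH0.eigenvalues i < 1).card ≤ 1)
    (φ : Fin n → ℂ) (hφunit : star φ ⬝ᵥ φ = 1)
    (hφB : B.mulVec φ = 0)
    (hφH0 : (star φ ⬝ᵥ H0.mulVec φ).re ≤ 3 / 4) :
    ∀ s : ℝ, 0 ≤ s → ∀ hs : (H0 + s • B).IsHermitian,
      -- the spectral gap `λ₁(s) − λ₀(s)` is at least `1/4`, i.e. at most one
      -- eigenvalue of `H0 + s B` lies below `λ₀(s) + 1/4`:
      (Finset.univ.filter fun i =>
        hs.eigenvalues i < (⨅ j, hs.eigenvalues j) + 1 / 4).card ≤ 1 := by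
  intro s hs0 hs
  have hground : ⨅ j, hs.eigenvalues j ≤ 3 / 4 := by
    have h := hs.iInf_eigenvalues_le_re_dotProduct hφunit
    rw [add_mulVec, smul_mulVec, hφB, smul_zero, add_zero] at h
    exact h.trans hφH0
  have hweyl := hH0.card_eigenvalues_lt_le_of_posSemidef_sub hs
    (by simpa only [add_sub_cancel_left] using hB.smul hs0) 1
  calc _ ≤ (Finset.univ.filter fun i => hs.eigenvalues i < 1).card :=
        Finset.card_le_card (Finset.monotone_filter_right _ fun i _ hi => by linarith)
    _ ≤ 1 := hweyl.trans h2

theorem stmt7 (n : ℕ) (hn : 2 ≤ n)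
    (H0 B : Matrix (Fin n) (Fin n) ℂ)
    (hH0 : H0.IsHermitian) (hB : B.PosSemidef)
    -- the second-smallest eigenvalue of `H0` (with multiplicity) is at least 1,
    -- i.e. at most one eigenvalue of `H0` is `< 1`:
    (h2 : (Finset.univ.filter fun i => hH0.eigenvalues i < 1).card ≤ 1)
    (φ : Fin n → ℂ) (hφunit : star φ ⬝ᵥ φ = 1)
    (hφB : B.mulVec φ = 0)
    (hφH0 : (star φ ⬝ᵥ H0.mulVec φ).re ≤ 3 / 4) :
    ∀ s : ℝ, 0 ≤ s → ∀ hs : (H0 + s • B).IsHermitian,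
      -- the spectral gap `λ₁(s) − λ₀(s)` is at least `1/4`, i.e. at most one
      -- eigenvalue of `H0 + s B` lies below `λ₀(s) + 1/4`:
      (Finset.univ.filter fun i =>
        hs.eigenvalues i < (⨅ j, hs.eigenvalues j) + 1 / 4).card ≤ 1 :=
  stmt7_general n H0 B hH0 hB h2 φ hφunit hφB hφH0
end

section
/- Let H be an n×n Hermitian matrix which is stoquastic in the standard basis, i.e. H_{t,t'} is real and H_{t,t'} ≤ 0 for all t ≠ t'. Let φ ∈ ℝ^n be a vector with φ_t > 0 for every index t. Then the smallest eigenvalue E of H satisfies E ≥ min_t ( (Hφ)_t / φ_t ). -/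
/-!
Let `ψ` be an eigenvector for an eigenvalue `μ`, rescaled so that `‖ψ s‖ ≤ φ s` for all `s`
with equality at some `t`. In row `t`, every off-diagonal term satisfies
`H t s * Re (conj (ψ t) * ψ s) ≥ H t s * φ t * φ s` because `H t s ≤ 0`, and the diagonal term
is an equality, so `Re μ * φ t ^ 2 = Re (conj (ψ t) * (H ψ) t) ≥ φ t * (H φ) t`.
-/

open Matrix

/-- Unlike the usual notion of stoquasticity, Hermitian symmetry is not required. -/
def Matrix.IsStoquastic {ι : Type*} (H : Matrix ι ι ℂ) : Prop :=
  ∀ t t', t ≠ t' → (H t t').im = 0 ∧ (H t t').re ≤ 0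

namespace Matrix.IsStoquastic

variable {ι : Type*} {H : Matrix ι ι ℂ}

lemma entry_re_mul_le_of_dominated (hH : H.IsStoquastic) {ψ : ι → ℂ} {φ : ι → ℝ}
    (hdom : ∀ s, ‖ψ s‖ ≤ φ s) {t : ι} (ht : ‖ψ t‖ = φ t) (s : ι) :
    (H t s).re * (φ t * φ s) ≤ (H t s * (star (ψ t) * ψ s)).re := by
  obtain rfl | hts := eq_or_ne t s
  · have hnorm : star (ψ t) * ψ t = ((φ t * φ t : ℝ) : ℂ) := by
      rw [← ht, Complex.star_def, mul_comm, Complex.mul_conj, Complex.normSq_eq_norm_sq, sq]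
    rw [hnorm, Complex.re_mul_ofReal]
  · obtain ⟨him, hre⟩ := hH t s hts
    have hcross : (star (ψ t) * ψ s).re ≤ φ t * φ s :=
      calc (star (ψ t) * ψ s).re ≤ ‖star (ψ t) * ψ s‖ := Complex.re_le_norm _
        _ = ‖ψ t‖ * ‖ψ s‖ := by rw [norm_mul, norm_star]
        _ ≤ φ t * φ s := by
          rw [ht]; exact mul_le_mul_of_nonneg_left (hdom s) (ht ▸ norm_nonneg _)
    rw [Complex.mul_re, him, zero_mul, sub_zero]
    exact mul_le_mul_of_nonpos_left hcross hre

lemma mul_mulVec_re_le_of_dominated [Fintype ι] (hH : H.IsStoquastic)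
    {ψ : ι → ℂ} {φ : ι → ℝ}
    (hdom : ∀ s, ‖ψ s‖ ≤ φ s) {t : ι} (ht : ‖ψ t‖ = φ t) :
    φ t * ((H *ᵥ fun s => (φ s : ℂ)) t).re ≤ (star (ψ t) * (H *ᵥ ψ) t).re := by
  have hlhs : φ t * ((H *ᵥ fun s => (φ s : ℂ)) t).re = ∑ s, (H t s).re * (φ t * φ s) := by
    simp only [mulVec, dotProduct, Complex.re_sum, Finset.mul_sum, Complex.re_mul_ofReal]
    exact Finset.sum_congr rfl fun s _ => by ring
  have hrhs : (star (ψ t) * (H *ᵥ ψ) t).re = ∑ s, (H t s * (star (ψ t) * ψ s)).re := by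
    simp only [mulVec, dotProduct, Finset.mul_sum, Complex.re_sum]
    exact Finset.sum_congr rfl fun s _ => by ring_nf
  rw [hlhs, hrhs]
  exact Finset.sum_le_sum fun s _ => hH.entry_re_mul_le_of_dominated hdom ht s

lemma exists_smul_dominated [Fintype ι] {φ : ι → ℝ} (hφ : ∀ s, 0 < φ s) {ψ : ι → ℂ}
    (hψ : ψ ≠ 0) : ∃ (c : ℂ) (t : ι), (∀ s, ‖(c • ψ) s‖ ≤ φ s) ∧ ‖(c • ψ) t‖ = φ t := by
  obtain ⟨s₀, hs₀⟩ := Function.ne_iff.mp hψ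
  have : Nonempty ι := ⟨s₀⟩
  obtain ⟨t, ht⟩ := Finite.exists_max fun s => ‖ψ s‖ / φ s
  have hψt : 0 < ‖ψ t‖ := by
    have := (div_pos (norm_pos_iff.mpr hs₀) (hφ s₀)).trans_le (ht s₀)
    exact (div_pos_iff_of_pos_right (hφ t)).mp this
  refine ⟨(φ t / ‖ψ t‖ : ℝ), t, fun s => ?_, ?_⟩
  · have hs := (div_le_div_iff₀ (hφ s) (hφ t)).mp (ht s)
    rw [Pi.smul_apply, norm_smul, Complex.norm_real, Real.norm_of_nonneg (div_pos (hφ t) hψt).le,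
      div_mul_eq_mul_div, div_le_iff₀ hψt]
    linarith
  · rw [Pi.smul_apply, norm_smul, Complex.norm_real, Real.norm_of_nonneg (div_pos (hφ t) hψt).le,
      div_mul_cancel₀ _ hψt.ne']

lemma exists_mulVec_re_le_eigenvalue_re [Fintype ι] (hH : H.IsStoquastic) {φ : ι → ℝ}
    (hφ : ∀ s, 0 < φ s) {μ : ℂ} {ψ : ι → ℂ} (hψ : ψ ≠ 0) (hμ : H *ᵥ ψ = μ • ψ) :
    ∃ t, ((H *ᵥ fun s => (φ s : ℂ)) t).re ≤ μ.re * φ t := by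
  obtain ⟨c, t, hdom, ht⟩ := exists_smul_dominated hφ hψ
  have hkey := hH.mul_mulVec_re_le_of_dominated hdom ht
  have hv : H *ᵥ c • ψ = μ • c • ψ := by rw [mulVec_smul, hμ, smul_comm]
  have hrayleigh : (star ((c • ψ) t) * (H *ᵥ c • ψ) t).re = μ.re * (φ t * φ t) := by
    rw [hv, Pi.smul_apply μ, smul_eq_mul μ, mul_left_comm, Complex.star_def, Complex.conj_mul',
      ht, ← Complex.ofReal_pow, Complex.re_mul_ofReal, sq]
  refine ⟨t, le_of_mul_le_mul_left ?_ (hφ t)⟩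
  linarith

lemma ciInf_le_eigenvalue_re [Fintype ι] (hH : H.IsStoquastic) {φ : ι → ℝ}
    (hφ : ∀ s, 0 < φ s) {μ : ℂ} {ψ : ι → ℂ} (hψ : ψ ≠ 0) (hμ : H *ᵥ ψ = μ • ψ) :
    (⨅ t, ((H *ᵥ fun s => (φ s : ℂ)) t).re / φ t) ≤ μ.re := by
  obtain ⟨t, ht⟩ := hH.exists_mulVec_re_le_eigenvalue_re hφ hψ hμ
  exact (ciInf_le (Finite.bddBelow_range _) t).trans ((div_le_iff₀ (hφ t)).mpr ht)

end Matrix.IsStoquastic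

theorem stmt9 (n : ℕ) (hn : 0 < n)
    (H : Matrix (Fin n) (Fin n) ℂ) (hH : H.IsHermitian)
    (hstoq : ∀ t t' : Fin n, t ≠ t' → (H t t').im = 0 ∧ (H t t').re ≤ 0)
    (φ : Fin n → ℝ) (hφ : ∀ t, 0 < φ t)
    (E : ℝ) (hE : E = ⨅ i, hH.eigenvalues i) :
    (⨅ t : Fin n, ((H.mulVec fun s => (φ s : ℂ)) t).re / φ t) ≤ E := by
  have : Nonempty (Fin n) := ⟨⟨0, hn⟩⟩
  rw [hE]
  refine le_ciInf fun i => ?_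
  have hμ : H *ᵥ ⇑(hH.eigenvectorBasis i) =
      (hH.eigenvalues i : ℂ) • ⇑(hH.eigenvectorBasis i) := by
    rw [hH.mulVec_eigenvectorBasis, RCLike.real_smul_eq_coe_smul (K := ℂ)]
    rfl
  have hψ : ⇑(hH.eigenvectorBasis i) ≠ 0 :=
    (WithLp.ofLp_eq_zero 2).ne.mpr (hH.eigenvectorBasis.orthonormal.ne_zero i)
  have hH' : H.IsStoquastic := hstoq
  simpa only [Complex.ofReal_re] using hH'.ciInf_le_eigenvalue_re hφ hψ hμ
end

section
/- Let H be a (T+1)×(T+1) complex Hermitian matrix which is tridiagonal in the standard basis, with entries a_t := H_{t,t} and b_t := H_{t,t+1} (so H_{t+1,t} = conj(b_t)), and suppose b_t ≠ 0 for all 0 ≤ t ≤ T−1. Let ψ be an eigenvector of H for its smallest eigenvalue, and assume ψ_0 ≠ 0 and ψ_T ≠ 0. Then ψ_t ≠ 0 for all 0 ≤ t ≤ T, and for every 0 ≤ t ≤ T−1 the complex number ψ_{t+1} · b_t / ψ_t is a negative real number. -/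
/-!
Let `E` be the ground energy, so that `A = H - E` is positive semidefinite with `A ψ = 0`. Since the
graph of a tridiagonal matrix is a path, a diagonal phase gauge `u` turns every off-diagonal entry
`b_t` into `-|b_t|`. Put `χ_t = u_t |ψ_t|`: entry by entry, `Re (conj χ_i A_ij χ_j)` is at most
`Re (conj ψ_i A_ij ψ_j)`, so `0 ≤ ⟨χ, A χ⟩ ≤ ⟨ψ, A ψ⟩ = 0`. Hence `χ` is a ground state as well and
every off-diagonal term `conj ψ_t b_t ψ_{t+1}` attains its smallest possible real part `-|…|`, i.e.
it is a nonpositive real. Finally, in the gauged basis the eigenvalue equation at a zero of `χ` is a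
sum of nonpositive terms, so zeros spread along the nonzero entries `b_t`; since `ψ_0 ≠ 0`, `ψ` has
no zeros at all.
-/

open Matrix
open scoped ComplexOrder

namespace Matrix

variable {n : Type*}

theorem IsHermitian.posSemidef_sub_iInf_eigenvalues {𝕜 : Type*} [RCLike 𝕜] [Fintype n]
    [DecidableEq n] {A : Matrix n n 𝕜} (hA : A.IsHermitian) :
    (A - algebraMap ℝ _ (⨅ i, hA.eigenvalues i)).PosSemidef := by
  have hB : (A - algebraMap ℝ _ (⨅ i, hA.eigenvalues i)).IsHermitian :=
    hA.sub (IsSelfAdjoint.algebraMap _ (.all _))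
  rw [hB.posSemidef_iff_eigenvalues_nonneg]
  intro i
  have h := hB.eigenvalues_mem_spectrum_real i
  rw [← spectrum.sub_singleton_eq, hA.spectrum_real_eq_range_eigenvalues] at h
  obtain ⟨_, ⟨j, rfl⟩, _, rfl, hj⟩ := h
  simp only [Pi.zero_apply, ← hj, sub_nonneg]
  exact ciInf_le (Set.finite_range _).bddBelow j

theorem PosSemidef.mulVec_eq_zero_of_re_nonpos {𝕜 : Type*} [RCLike 𝕜] [Fintype n]
    {A : Matrix n n 𝕜} (hA : A.PosSemidef) {x : n → 𝕜} (hx : RCLike.re (star x ⬝ᵥ A *ᵥ x) ≤ 0) :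
    A *ᵥ x = 0 := by
  refine (hA.dotProduct_mulVec_zero_iff x).mp ?_
  obtain ⟨hre, him⟩ := RCLike.nonneg_iff.mp (hA.dotProduct_mulVec_nonneg x)
  exact RCLike.ext (by simpa using le_antisymm hx hre) (by simpa using him)

theorem re_star_dotProduct_mulVec [Fintype n] (A : Matrix n n ℂ) (x : n → ℂ) :
    (star x ⬝ᵥ A *ᵥ x).re = ∑ i, ∑ j, (star (x i) * A i j * x j).re := by
  simp only [dotProduct, mulVec, Finset.mul_sum, Complex.re_sum, Pi.star_apply, mul_assoc]

/-- `diagonal u` conjugates `A` into a stoquastic matrix. -/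
structure StoquasticGauge (A : Matrix n n ℂ) (u : n → ℂ) : Prop where
  norm_eq_one : ∀ i, ‖u i‖ = 1
  star_mul_mul_eq : ∀ i j, i ≠ j → star (u i) * A i j * u j = -(‖A i j‖ : ℂ)

noncomputable def phaseAbs (u ψ : n → ℂ) : n → ℂ := fun i ↦ ‖ψ i‖ * u i

namespace StoquasticGauge

variable {A : Matrix n n ℂ} {u : n → ℂ}

theorem sub_diagonal [DecidableEq n] (hu : StoquasticGauge A u) (d : n → ℂ) :
    StoquasticGauge (A - diagonal d) u where
  norm_eq_one := hu.norm_eq_one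
  star_mul_mul_eq i j hij := by
    simpa only [sub_apply, diagonal_apply_ne _ hij, sub_zero] using hu.star_mul_mul_eq i j hij

theorem star_phaseAbs_mul_mul_phaseAbs_self (hu : StoquasticGauge A u) (ψ : n → ℂ) (i : n) :
    star (phaseAbs u ψ i) * A i i * phaseAbs u ψ i = star (ψ i) * A i i * ψ i := by
  have hu2 : star (u i) * u i = 1 := by
    rw [Complex.star_def, Complex.conj_mul', hu.norm_eq_one]; norm_num
  have hψ2 : star (ψ i) * ψ i = (‖ψ i‖ : ℂ) ^ 2 := by rw [Complex.star_def, Complex.conj_mul']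
  simp only [phaseAbs, star_mul', Complex.star_def, Complex.conj_ofReal] at hu2 hψ2 ⊢
  linear_combination (A i i * ‖ψ i‖ ^ 2) * hu2 - A i i * hψ2

theorem star_phaseAbs_mul_mul_phaseAbs_of_ne (hu : StoquasticGauge A u) (ψ : n → ℂ) {i j : n}
    (hij : i ≠ j) :
    star (phaseAbs u ψ i) * A i j * phaseAbs u ψ j = -(‖star (ψ i) * A i j * ψ j‖ : ℂ) := by
  have h := hu.star_mul_mul_eq i j hij
  simp only [phaseAbs, star_mul', Complex.star_def, Complex.conj_ofReal, norm_mul,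
    Complex.norm_conj, Complex.ofReal_mul] at h ⊢
  linear_combination (‖ψ i‖ * ‖ψ j‖ : ℂ) * h

theorem re_star_phaseAbs_mul_mul_phaseAbs_le (hu : StoquasticGauge A u) (ψ : n → ℂ) (i j : n) :
    (star (phaseAbs u ψ i) * A i j * phaseAbs u ψ j).re ≤ (star (ψ i) * A i j * ψ j).re := by
  rcases eq_or_ne i j with rfl | hij
  · rw [hu.star_phaseAbs_mul_mul_phaseAbs_self]
  · rw [hu.star_phaseAbs_mul_mul_phaseAbs_of_ne ψ hij, Complex.neg_re, Complex.ofReal_re]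
    exact neg_le_of_abs_le (Complex.abs_re_le_norm _)

theorem re_dotProduct_phaseAbs_le [Fintype n] (hu : StoquasticGauge A u) (ψ : n → ℂ) :
    (star (phaseAbs u ψ) ⬝ᵥ A *ᵥ phaseAbs u ψ).re ≤ (star ψ ⬝ᵥ A *ᵥ ψ).re := by
  simp only [re_star_dotProduct_mulVec]
  exact Finset.sum_le_sum fun i _ ↦ Finset.sum_le_sum fun j _ ↦
    hu.re_star_phaseAbs_mul_mul_phaseAbs_le ψ i j

variable [Fintype n] {ψ : n → ℂ}

theorem mulVec_phaseAbs_eq_zero (hu : StoquasticGauge A u) (hA : A.PosSemidef)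
    (hψ : A *ᵥ ψ = 0) : A *ᵥ phaseAbs u ψ = 0 :=
  hA.mulVec_eq_zero_of_re_nonpos <| by
    simpa [hψ] using hu.re_dotProduct_phaseAbs_le ψ

theorem star_mul_mul_nonpos (hu : StoquasticGauge A u) (hA : A.PosSemidef) (hψ : A *ᵥ ψ = 0)
    {i j : n} (hij : i ≠ j) : star (ψ i) * A i j * ψ j ≤ 0 := by
  let gap : n → n → ℝ := fun i j ↦
    (star (ψ i) * A i j * ψ j).re - (star (phaseAbs u ψ i) * A i j * phaseAbs u ψ j).re
  have hgap_nonneg : ∀ i j, 0 ≤ gap i j := fun i j ↦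
    sub_nonneg.mpr (hu.re_star_phaseAbs_mul_mul_phaseAbs_le ψ i j)
  have hgap_sum : ∑ i, ∑ j, gap i j = 0 := by
    simp only [gap, Finset.sum_sub_distrib, ← re_star_dotProduct_mulVec, hψ,
      hu.mulVec_phaseAbs_eq_zero hA hψ, dotProduct_zero, sub_self]
  have hgap : gap i j = 0 := by
    rw [Finset.sum_eq_zero_iff_of_nonneg fun i _ ↦ Finset.sum_nonneg fun j _ ↦ hgap_nonneg i j]
      at hgap_sum
    exact (Finset.sum_eq_zero_iff_of_nonneg fun j _ ↦ hgap_nonneg i j).mp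
      (hgap_sum i (Finset.mem_univ _)) j (Finset.mem_univ _)
  rw [← Complex.re_eq_neg_norm]
  simpa only [gap, hu.star_phaseAbs_mul_mul_phaseAbs_of_ne ψ hij, Complex.neg_re,
    Complex.ofReal_re, sub_eq_zero] using hgap

theorem apply_eq_zero_of_apply_eq_zero (hu : StoquasticGauge A u) (hA : A.PosSemidef)
    (hψ : A *ᵥ ψ = 0) {i j : n} (hi : ψ i = 0) (hij : A i j ≠ 0) : ψ j = 0 := by
  have hterm : ∀ k, star (u i) * (A i k * phaseAbs u ψ k) = -((‖A i k‖ * ‖ψ k‖ : ℝ) : ℂ) := by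
    intro k
    rcases eq_or_ne i k with rfl | hik
    · simp [phaseAbs, hi]
    · push_cast [phaseAbs]
      linear_combination (‖ψ k‖ : ℂ) * hu.star_mul_mul_eq i k hik
  have hsum : ∑ k, ‖A i k‖ * ‖ψ k‖ = 0 := by
    have hrow := congrArg (star (u i) * ·) (congrFun (hu.mulVec_phaseAbs_eq_zero hA hψ) i)
    simp only [mulVec, dotProduct, Finset.mul_sum, hterm, Pi.zero_apply, mul_zero,
      Finset.sum_neg_distrib, neg_eq_zero] at hrow
    exact_mod_cast hrow
  have hj := (Finset.sum_eq_zero_iff_of_nonneg fun k _ ↦ by positivity).mp hsum j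
    (Finset.mem_univ _)
  exact norm_eq_zero.mp ((mul_eq_zero.mp hj).resolve_left (norm_ne_zero_iff.mpr hij))

end StoquasticGauge
end Matrix

open Complex in
theorem Fin.exists_phases_star_mul_mul_succ_eq_neg_norm {T : ℕ} (b : Fin T → ℂ) :
    ∃ u : Fin (T + 1) → ℂ, (∀ t, ‖u t‖ = 1) ∧
      ∀ t : Fin T, star (u t.castSucc) * b t * u t.succ = -(‖b t‖ : ℂ) := by
  set u := Fin.partialProd fun t ↦ -exp (-(arg (b t) : ℂ) * I)
  have hu_succ : ∀ t : Fin T, u t.succ = u t.castSucc * -exp (-(arg (b t) : ℂ) * I) :=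
    Fin.partialProd_succ _
  have hu : ∀ t, ‖u t‖ = 1 := by
    intro t
    induction t using Fin.induction with
    | zero => simp [u]
    | succ t ih =>
      rw [hu_succ, norm_mul, ih, norm_neg, ← ofReal_neg, norm_exp_ofReal_mul_I, one_mul]
  refine ⟨u, hu, fun t ↦ ?_⟩
  have hut : star (u t.castSucc) * u t.castSucc = 1 := by
    rw [star_def, conj_mul', hu]; norm_num
  have hbt : b t * exp (-(arg (b t) : ℂ) * I) = ‖b t‖ := by
    conv_lhs => rw [← norm_mul_exp_arg_mul_I (b t)]
    rw [mul_assoc, ← exp_add]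
    simp
  rw [hu_succ]
  linear_combination (-(b t * exp (-(arg (b t) : ℂ) * I))) * hut - hbt

theorem Matrix.exists_stoquasticGauge_of_tridiagonal {T : ℕ}
    {A : Matrix (Fin (T + 1)) (Fin (T + 1)) ℂ} (hA : A.IsHermitian)
    (htri : ∀ t t' : Fin (T + 1), 1 < |(t.val : ℤ) - (t'.val : ℤ)| → A t t' = 0) :
    ∃ u, A.StoquasticGauge u := by
  obtain ⟨u, hu_norm, hu_chain⟩ :=
    Fin.exists_phases_star_mul_mul_succ_eq_neg_norm fun t ↦ A t.castSucc t.succ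
  refine ⟨u, hu_norm, fun i j hij ↦ ?_⟩
  wlog hlt : i < j generalizing i j
  · have h := congrArg star (this j i hij.symm (lt_of_le_of_ne (not_lt.mp hlt) hij.symm))
    rw [← hA.apply i j, norm_star]
    simp only [star_mul', star_neg, Complex.star_def, Complex.conj_conj, Complex.conj_ofReal]
      at h ⊢
    linear_combination h
  by_cases hsucc : (j : ℕ) = i + 1
  · obtain ⟨t, rfl, rfl⟩ : ∃ t : Fin T, t.castSucc = i ∧ t.succ = j :=
      ⟨⟨i, by omega⟩, Fin.ext rfl, Fin.ext (by simp [hsucc])⟩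
    exact hu_chain t
  · rw [htri i j (by rw [lt_abs]; right; push_cast [Fin.lt_def] at hlt ⊢; omega)]
    simp

theorem Complex.exists_neg_eq_div_of_star_mul_nonpos {x y : ℂ} (hx : x ≠ 0) (hy : y ≠ 0)
    (h : star x * y ≤ 0) : ∃ r : ℝ, r < 0 ∧ y / x = r := by
  have hxy : star x * y < 0 := lt_of_le_of_ne h (mul_ne_zero (star_ne_zero.mpr hx) hy)
  obtain ⟨hre, him⟩ := Complex.neg_iff.mp hxy
  refine ⟨(star x * y).re / ‖x‖ ^ 2, div_neg_of_neg_of_pos hre (by positivity), ?_⟩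
  have hxx : star x * x = (‖x‖ : ℂ) ^ 2 := by rw [Complex.star_def, Complex.conj_mul']
  have hreal : star x * y = ((star x * y).re : ℂ) :=
    Complex.ext rfl (by rw [him, Complex.ofReal_im])
  have hx' : (‖x‖ : ℂ) ≠ 0 := by simpa using hx
  rw [div_eq_iff hx, Complex.ofReal_div, Complex.ofReal_pow, ← hreal, div_mul_eq_mul_div,
    eq_div_iff (pow_ne_zero 2 hx')]
  linear_combination (-y) * hxx

theorem stmt11_general (T : ℕ)
    (H : Matrix (Fin (T + 1)) (Fin (T + 1)) ℂ) (hH : H.IsHermitian)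
    -- `H` is tridiagonal
    (htri : ∀ t t' : Fin (T + 1), 1 < |(t.val : ℤ) - (t'.val : ℤ)| → H t t' = 0)
    -- the off-diagonal entries `b_t = H_{t,t+1}` are nonzero
    (hb : ∀ t : Fin T, H t.castSucc t.succ ≠ 0)
    (ψ : Fin (T + 1) → ℂ)
    -- `ψ` is an eigenvector for the smallest eigenvalue of `H`
    (hψ : H.mulVec ψ = ((⨅ i, hH.eigenvalues i : ℝ) : ℂ) • ψ)
    (hψfirst : ψ 0 ≠ 0) :
    (∀ t : Fin (T + 1), ψ t ≠ 0) ∧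
    (∀ t : Fin T, ∃ r : ℝ, r < 0 ∧
      ψ t.succ * H t.castSucc t.succ / ψ t.castSucc = (r : ℂ)) := by
  set E := ⨅ i, hH.eigenvalues i
  set A := H - algebraMap ℝ _ E
  have hA : A.PosSemidef := hH.posSemidef_sub_iInf_eigenvalues
  have hAψ : A *ᵥ ψ = 0 := by
    rw [sub_mulVec, hψ, Algebra.algebraMap_eq_smul_one, smul_mulVec, one_mulVec, sub_eq_zero,
      Complex.coe_smul]
  have hAH : ∀ {i j}, i ≠ j → A i j = H i j := fun hij ↦ by
    simp [A, algebraMap_eq_diagonal, diagonal_apply_ne _ hij]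
  obtain ⟨u, hu⟩ := exists_stoquasticGauge_of_tridiagonal hH htri
  replace hu : A.StoquasticGauge u := by
    simpa only [A, algebraMap_eq_diagonal] using hu.sub_diagonal _
  have hne : ∀ t, ψ t ≠ 0 := by
    intro t
    induction t using Fin.induction with
    | zero => exact hψfirst
    | succ t ih =>
      refine fun h ↦ ih (hu.apply_eq_zero_of_apply_eq_zero hA hAψ h ?_)
      rw [hAH Fin.castSucc_lt_succ.ne', ← hH.apply]
      exact star_ne_zero.mpr (hb t)
  refine ⟨hne, fun t ↦ Complex.exists_neg_eq_div_of_star_mul_nonpos (hne _)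
    (mul_ne_zero (hne _) (hb t)) ?_⟩
  have hlt : t.castSucc < t.succ := Fin.castSucc_lt_succ
  have h := hu.star_mul_mul_nonpos hA hAψ hlt.ne
  rwa [hAH hlt.ne, mul_assoc, mul_comm (H _ _)] at h

theorem stmt11 (T : ℕ) (hT : 1 ≤ T)
    (H : Matrix (Fin (T + 1)) (Fin (T + 1)) ℂ) (hH : H.IsHermitian)
    -- `H` is tridiagonal
    (htri : ∀ t t' : Fin (T + 1), 1 < |(t.val : ℤ) - (t'.val : ℤ)| → H t t' = 0)
    -- the off-diagonal entries `b_t = H_{t,t+1}` are nonzero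
    (hb : ∀ t : Fin T, H t.castSucc t.succ ≠ 0)
    (ψ : Fin (T + 1) → ℂ) (hψ0 : ψ ≠ 0)
    -- `ψ` is an eigenvector for the smallest eigenvalue of `H`
    (hψ : H.mulVec ψ = ((⨅ i, hH.eigenvalues i : ℝ) : ℂ) • ψ)
    (hψfirst : ψ 0 ≠ 0) (hψlast : ψ (Fin.last T) ≠ 0) :
    (∀ t : Fin (T + 1), ψ t ≠ 0) ∧
    (∀ t : Fin T, ∃ r : ℝ, r < 0 ∧
      ψ t.succ * H t.castSucc t.succ / ψ t.castSucc = (r : ℂ)) :=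
  stmt11_general T H hH htri hb ψ hψ hψfirst
end

section
/- Let G be an n×n complex Hermitian matrix all of whose eigenvalues lie in [0,1], such that 1 is a simple eigenvalue of G with unit eigenvector ψ satisfying π_min := min_x |ψ_x|² > 0, and let Δ := 1 − λ₂ > 0 where λ₂ is the second-largest eigenvalue of G counted with multiplicity. Then for every pair of standard basis indices u, v there exists a natural number k with k ≤ (1 + 1/√(2Δ)) · log(2/π_min) + 1 and (G^k)_{u,v} ≠ 0. -/
/-!
Expand `G` in an orthonormal eigenbasis `bᵢ`. For a real polynomial `q`,
`q(G)_{uv} = ∑ᵢ q(λᵢ) bᵢ(u) conj(bᵢ(v))`. Since the eigenvalue 1 is simple, its term is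
`q(1) ψ_u conj(ψ_v)`, of modulus at least `q(1) π_min`, whereas by AM-GM on the rows of the
unitary eigenvector matrix the remaining terms have total modulus at most
`max_{0 ≤ λ ≤ 1 - Δ} |q(λ)|`. The rescaled Chebyshev polynomial `q(x) = T_d(x / (1 - δ))` is
bounded by 1 on `[0, 1 - δ]`, and `q(1) = cosh (d · arcosh (1 / (1 - δ))) > exp (d √(2δ)) / 2`.
Taking `d = ⌈log (2 / π_min) / √(2δ)⌉` the top term dominates, so `q(G)_{uv} ≠ 0` and some
`G^k` with `k ≤ d` has a nonzero `(u, v)` entry.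
-/

open Matrix Polynomial

section ChebyshevGrowth

open Real Polynomial.Chebyshev

theorem cosh_sqrt_two_mul_le_inv_one_sub {δ : ℝ} (hδ0 : 0 ≤ δ) (hδ1 : δ < 1) :
    cosh √(2 * δ) ≤ (1 - δ)⁻¹ :=
  calc cosh √(2 * δ) ≤ exp (√(2 * δ) ^ 2 / 2) := cosh_le_exp_half_sq _
    _ = exp δ := by rw [sq_sqrt (by positivity)]; ring_nf
    _ ≤ (1 - δ)⁻¹ := by simpa using exp_bound_div_one_sub_of_interval hδ0 hδ1

theorem exp_mul_sqrt_div_two_lt_eval_T (d : ℕ) {δ : ℝ} (hδ0 : 0 ≤ δ) (hδ1 : δ < 1) :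
    exp (d * √(2 * δ)) / 2 < (T ℝ d).eval (1 - δ)⁻¹ := by
  have hy : 1 ≤ (1 - δ)⁻¹ := (one_le_inv₀ (by linarith)).mpr (by linarith)
  have hst : √(2 * δ) ≤ arcosh (1 - δ)⁻¹ := by
    rw [← arcosh_cosh (sqrt_nonneg _)]
    exact (arcosh_le_arcosh (cosh_pos _) (by linarith)).mpr
      (cosh_sqrt_two_mul_le_inv_one_sub hδ0 hδ1)
  calc exp (d * √(2 * δ)) / 2 < cosh (d * √(2 * δ)) := by
        rw [cosh_eq]; linarith [exp_pos (-(d * √(2 * δ)))]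
    _ ≤ cosh (d * arcosh (1 - δ)⁻¹) := by
        rw [cosh_le_cosh, abs_of_nonneg (by positivity),
          abs_of_nonneg (mul_nonneg d.cast_nonneg (arcosh_nonneg hy))]
        gcongr
    _ = (T ℝ d).eval (1 - δ)⁻¹ := by
        rw [← cosh_arcosh hy, T_real_cosh, cosh_arcosh hy]; norm_cast

-- Capping the gap at `1 / 2` keeps the rescaling point `1 - min Δ (1 / 2)` positive.
theorem exists_degree_inv_lt_eval_T {Δ p : ℝ} (hΔ : 0 < Δ) (hp0 : 0 < p) (hp1 : p ≤ 1) :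
    ∃ d : ℕ, (d : ℝ) ≤ (1 + 1 / √(2 * Δ)) * log (2 / p) + 1 ∧
      p⁻¹ < (T ℝ d).eval (1 - min Δ (1 / 2))⁻¹ := by
  set δ := min Δ (1 / 2) with hδ
  set L := log (2 / p)
  have hδ0 : 0 < δ := lt_min hΔ (by norm_num)
  have hs : 0 < √(2 * δ) := sqrt_pos.mpr (by positivity)
  have hL : 0 ≤ L := log_nonneg (by rw [le_div_iff₀ hp0]; linarith)
  have hs_inv : 1 / √(2 * δ) ≤ 1 + 1 / √(2 * Δ) := by
    rcases le_total Δ (1 / 2) with h | h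
    · rw [hδ, min_eq_left h]; linarith [one_div_pos.mpr (sqrt_pos.mpr (by linarith : 0 < 2 * Δ))]
    · rw [hδ, min_eq_right h]; norm_num
  refine ⟨⌈L / √(2 * δ)⌉₊, ?_, ?_⟩
  · calc (⌈L / √(2 * δ)⌉₊ : ℝ) ≤ L / √(2 * δ) + 1 := (Nat.ceil_lt_add_one (by positivity)).le
      _ = 1 / √(2 * δ) * L + 1 := by ring
      _ ≤ (1 + 1 / √(2 * Δ)) * L + 1 := by gcongr
  · have hexp : 2 / p ≤ exp (⌈L / √(2 * δ)⌉₊ * √(2 * δ)) := by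
      rw [← exp_log (by positivity : 0 < 2 / p)]
      exact exp_le_exp.mpr ((div_le_iff₀ hs).mp (Nat.le_ceil _))
    calc p⁻¹ = 2 / p / 2 := by ring
      _ ≤ exp (⌈L / √(2 * δ)⌉₊ * √(2 * δ)) / 2 := by gcongr
      _ < _ := exp_mul_sqrt_div_two_lt_eval_T _ hδ0.le (by linarith [min_le_right Δ (1 / 2)])

theorem exists_polynomial_abs_eval_le_one_inv_lt_eval_one {Δ p : ℝ} (hΔ : 0 < Δ) (hp0 : 0 < p)
    (hp1 : p ≤ 1) :
    ∃ q : ℝ[X], (q.natDegree : ℝ) ≤ (1 + 1 / √(2 * Δ)) * log (2 / p) + 1 ∧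
      (∀ x ∈ Set.Icc 0 (1 - Δ), |q.eval x| ≤ 1) ∧ p⁻¹ < q.eval 1 := by
  obtain ⟨d, hd, hTd⟩ := exists_degree_inv_lt_eval_T hΔ hp0 hp1
  set b := 1 - min Δ (1 / 2)
  have hb : 0 < b := by linarith [min_le_right Δ (1 / 2)]
  refine ⟨(T ℝ d).comp (C b⁻¹ * X), ?_, fun x hx => ?_, by simpa using hTd⟩
  · rwa [natDegree_comp, natDegree_T, natDegree_C_mul_X _ (inv_ne_zero hb.ne'), mul_one,
      Int.natAbs_natCast]
  · have hxb : x ≤ b := by linarith [hx.2, min_le_left Δ (1 / 2)]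
    rw [eval_comp, eval_mul, eval_C, eval_X]
    refine abs_eval_T_real_le_one _ (abs_le.mpr ⟨?_, ?_⟩)
    · linarith [mul_nonneg (inv_nonneg.mpr hb.le) hx.1]
    · rwa [inv_mul_le_iff₀ hb, mul_one]

end ChebyshevGrowth

theorem Finset.sum_ne_zero_of_sum_erase_norm_lt {ι E : Type*} [SeminormedAddCommGroup E]
    [DecidableEq ι] {s : Finset ι} {f : ι → E} {i : ι} (hi : i ∈ s)
    (h : ∑ j ∈ s.erase i, ‖f j‖ < ‖f i‖) : ∑ j ∈ s, f j ≠ 0 := by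
  rw [← Finset.add_sum_erase s f hi]
  intro h0
  rw [eq_neg_of_add_eq_zero_left h0, norm_neg] at h
  exact h.not_ge (norm_sum_le _ _)

theorem sum_norm_sq_eq_one_of_star_dotProduct_self_eq_one {𝕜 n : Type*} [RCLike 𝕜] [Fintype n]
    {v : n → 𝕜} (hv : star v ⬝ᵥ v = 1) : ∑ i, ‖v i‖ ^ 2 = 1 := by
  simp only [dotProduct, Pi.star_apply, RCLike.star_def, RCLike.conj_mul] at hv
  exact_mod_cast hv

theorem Matrix.exists_pow_apply_ne_zero_of_aeval_apply_ne_zero {R S n : Type*} [CommSemiring R]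
    [Semiring S] [Algebra R S] [Fintype n] [DecidableEq n] {A : Matrix n n S} {q : R[X]}
    {u v : n} (h : aeval A q u v ≠ 0) : ∃ k ≤ q.natDegree, (A ^ k) u v ≠ 0 := by
  rw [aeval_eq_sum_range, Matrix.sum_apply] at h
  obtain ⟨k, hk, hne⟩ := Finset.exists_ne_zero_of_sum_ne_zero h
  refine ⟨k, Nat.lt_succ_iff.mp (Finset.mem_range.mp hk), fun h0 => hne ?_⟩
  rw [Matrix.smul_apply, h0, smul_zero]

namespace Matrix.IsHermitian

variable {𝕜 n : Type*} [RCLike 𝕜] [Fintype n] [DecidableEq n] {A : Matrix n n 𝕜}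
  (hA : A.IsHermitian)

theorem aeval_apply (q : ℝ[X]) (u v : n) :
    aeval A q u v = ∑ i, ((q.eval (hA.eigenvalues i) : ℝ) : 𝕜) *
      (hA.eigenvectorBasis i u * star (hA.eigenvectorBasis i v)) := by
  rw [← cfc_polynomial q A hA.isSelfAdjoint, hA.cfc_eq, IsHermitian.cfc,
    Unitary.conjStarAlgAut_apply, mul_apply]
  refine Finset.sum_congr rfl fun i _ => ?_
  simp only [mul_diagonal, eigenvectorUnitary_apply, Function.comp_apply, star_apply,
    RCLike.star_def]
  ring

theorem sum_norm_eigenvectorBasis_apply_sq (u : n) :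
    ∑ i, ‖hA.eigenvectorBasis i u‖ ^ 2 = 1 := by
  have h := congr_fun₂ (mem_unitaryGroup_iff.mp hA.eigenvectorUnitary.2) u u
  simp only [mul_apply, star_apply, one_apply_eq, eigenvectorUnitary_apply, RCLike.star_def,
    RCLike.mul_conj] at h
  exact_mod_cast h

theorem sum_norm_mul_norm_eigenvectorBasis_le_one (u v : n) :
    ∑ i, ‖hA.eigenvectorBasis i u‖ * ‖hA.eigenvectorBasis i v‖ ≤ 1 :=
  calc ∑ i, ‖hA.eigenvectorBasis i u‖ * ‖hA.eigenvectorBasis i v‖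
      ≤ ∑ i, (‖hA.eigenvectorBasis i u‖ ^ 2 + ‖hA.eigenvectorBasis i v‖ ^ 2) / 2 :=
        Finset.sum_le_sum fun i _ => by
          linarith [two_mul_le_add_sq ‖hA.eigenvectorBasis i u‖ ‖hA.eigenvectorBasis i v‖]
    _ = 1 := by
        rw [← Finset.sum_div, Finset.sum_add_distrib, hA.sum_norm_eigenvectorBasis_apply_sq,
          hA.sum_norm_eigenvectorBasis_apply_sq]
        norm_num

theorem star_eigenvectorBasis_dotProduct (i j : n) :
    star ⇑(hA.eigenvectorBasis i) ⬝ᵥ ⇑(hA.eigenvectorBasis j) = if i = j then 1 else 0 := by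
  rw [dotProduct_comm, ← EuclideanSpace.inner_eq_star_dotProduct]
  exact orthonormal_iff_ite.mp hA.eigenvectorBasis.orthonormal i j

theorem exists_eigenvalues_eq_one {ψ : n → 𝕜} (hψ : ψ ≠ 0) (hψA : A *ᵥ ψ = ψ) :
    ∃ i, hA.eigenvalues i = 1 := by
  suffices (1 : ℝ) ∈ spectrum ℝ A by rwa [hA.spectrum_real_eq_range_eigenvalues] at this
  refine spectrum.mem_iff.mpr fun hunit => hψ (mulVec_injective_iff_isUnit.mpr hunit ?_)
  simp [sub_mulVec, hψA]

variable {ψ : n → 𝕜}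

theorem exists_eigenvectorBasis_eq_smul (hψ : star ψ ⬝ᵥ ψ = 1)
    (hsimple : ∀ φ : n → 𝕜, A *ᵥ φ = φ → ∃ c : 𝕜, φ = c • ψ) {i : n}
    (hi : hA.eigenvalues i = 1) :
    ∃ c : 𝕜, star c * c = 1 ∧ ⇑(hA.eigenvectorBasis i) = c • ψ := by
  obtain ⟨c, hc⟩ := hsimple _ (by rw [hA.mulVec_eigenvectorBasis, hi, one_smul])
  refine ⟨c, ?_, hc⟩
  have := hA.star_eigenvectorBasis_dotProduct i i
  rwa [if_pos rfl, hc, star_smul, smul_dotProduct, dotProduct_smul, hψ, smul_eq_mul,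
    smul_eq_mul, mul_one] at this

theorem eq_of_eigenvalues_eq_one (hψ : star ψ ⬝ᵥ ψ = 1)
    (hsimple : ∀ φ : n → 𝕜, A *ᵥ φ = φ → ∃ c : 𝕜, φ = c • ψ) {i j : n}
    (hi : hA.eigenvalues i = 1) (hj : hA.eigenvalues j = 1) : i = j := by
  obtain ⟨c, hcc, hc⟩ := hA.exists_eigenvectorBasis_eq_smul hψ hsimple hi
  obtain ⟨c', hcc', hc'⟩ := hA.exists_eigenvectorBasis_eq_smul hψ hsimple hj
  by_contra hij
  have h := hA.star_eigenvectorBasis_dotProduct i j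
  rw [if_neg hij, hc, hc', star_smul, smul_dotProduct, dotProduct_smul, hψ, smul_eq_mul,
    smul_eq_mul, mul_one] at h
  have : (star c * c') * (star c' * c) = 1 := by
    rw [show (star c * c') * (star c' * c) = (star c * c) * (star c' * c') by ring, hcc, hcc',
      one_mul]
  rw [h, zero_mul] at this
  exact zero_ne_one this

theorem eigenvectorBasis_apply_mul_star_eq (hψ : star ψ ⬝ᵥ ψ = 1)
    (hsimple : ∀ φ : n → 𝕜, A *ᵥ φ = φ → ∃ c : 𝕜, φ = c • ψ) {i : n}
    (hi : hA.eigenvalues i = 1) (u v : n) :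
    hA.eigenvectorBasis i u * star (hA.eigenvectorBasis i v) = ψ u * star (ψ v) := by
  obtain ⟨c, hcc, hc⟩ := hA.exists_eigenvectorBasis_eq_smul hψ hsimple hi
  rw [hc, Pi.smul_apply, Pi.smul_apply, smul_eq_mul, smul_eq_mul, star_mul']
  linear_combination (ψ u * star (ψ v)) * hcc

theorem aeval_apply_ne_zero_of_dominant_top_eigenvalue (hψ : star ψ ⬝ᵥ ψ = 1)
    (hsimple : ∀ φ : n → 𝕜, A *ᵥ φ = φ → ∃ c : 𝕜, φ = c • ψ) (hψA : A *ᵥ ψ = ψ) {q : ℝ[X]}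
    (hq : ∀ i, hA.eigenvalues i ≠ 1 → |q.eval (hA.eigenvalues i)| ≤ 1) {u v : n}
    (huv : 1 < q.eval 1 * (‖ψ u‖ * ‖ψ v‖)) : aeval A q u v ≠ 0 := by
  have hψ0 : ψ ≠ 0 := by rintro rfl; simp at hψ
  obtain ⟨i₀, hi₀⟩ := hA.exists_eigenvalues_eq_one hψ0 hψA
  rw [hA.aeval_apply]
  refine Finset.sum_ne_zero_of_sum_erase_norm_lt (Finset.mem_univ i₀) ?_
  calc ∑ i ∈ Finset.univ.erase i₀, ‖((q.eval (hA.eigenvalues i) : ℝ) : 𝕜) *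
        (hA.eigenvectorBasis i u * star (hA.eigenvectorBasis i v))‖
      ≤ ∑ i ∈ Finset.univ.erase i₀, ‖hA.eigenvectorBasis i u‖ * ‖hA.eigenvectorBasis i v‖ := by
        refine Finset.sum_le_sum fun i hi => ?_
        rw [norm_mul, norm_mul, norm_star, RCLike.norm_ofReal]
        refine mul_le_of_le_one_left (by positivity) (hq i fun h => ?_)
        exact Finset.ne_of_mem_erase hi (hA.eq_of_eigenvalues_eq_one hψ hsimple h hi₀)
    _ ≤ ∑ i, ‖hA.eigenvectorBasis i u‖ * ‖hA.eigenvectorBasis i v‖ :=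
        Finset.sum_le_sum_of_subset_of_nonneg (Finset.erase_subset _ _) fun _ _ _ => by positivity
    _ ≤ 1 := hA.sum_norm_mul_norm_eigenvectorBasis_le_one u v
    _ < q.eval 1 * (‖ψ u‖ * ‖ψ v‖) := huv
    _ ≤ _ := by
        rw [hA.eigenvectorBasis_apply_mul_star_eq hψ hsimple hi₀, hi₀, norm_mul, norm_mul,
          norm_star, RCLike.norm_ofReal]
        gcongr
        exact le_abs_self _

end Matrix.IsHermitian

theorem stmt14_general (n : ℕ)
    (G : Matrix (Fin n) (Fin n) ℂ) (hG : G.IsHermitian)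
    -- all eigenvalues of `G` lie in `[0,1]`
    (hspec : ∀ i, hG.eigenvalues i ∈ Set.Icc (0 : ℝ) 1)
    -- `ψ` is a unit eigenvector of `G` for the simple eigenvalue 1
    (ψ : Fin n → ℂ) (hψunit : star ψ ⬝ᵥ ψ = 1) (hψeig : G.mulVec ψ = ψ)
    (hsimple : ∀ φ : Fin n → ℂ, G.mulVec φ = φ → ∃ c : ℂ, φ = c • ψ)
    -- `π_min` is the minimum squared overlap of `ψ` with the basis, and is positive
    (hπmin : 0 < ⨅ x, ‖ψ x‖ ^ 2)
    -- `Δ = 1 − λ₂`: all eigenvalues other than the simple top eigenvalue 1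
    -- are at most `1 − Δ`
    (Δ : ℝ) (hΔpos : 0 < Δ)
    (hgap : ∀ i, hG.eigenvalues i = 1 ∨ hG.eigenvalues i ≤ 1 - Δ) :
    ∀ u v : Fin n, ∃ k : ℕ,
      (k : ℝ) ≤ (1 + 1 / Real.sqrt (2 * Δ))
          * Real.log (2 / ⨅ x, ‖ψ x‖ ^ 2) + 1 ∧
      (G ^ k) u v ≠ 0 := by
  intro u v
  set p := ⨅ x, ‖ψ x‖ ^ 2
  have hp_le (x : Fin n) : p ≤ ‖ψ x‖ ^ 2 := ciInf_le (Set.finite_range _).bddBelow x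
  have hp_one : p ≤ 1 := by
    refine (hp_le u).trans ?_
    rw [← sum_norm_sq_eq_one_of_star_dotProduct_self_eq_one hψunit]
    exact Finset.single_le_sum (fun x _ => sq_nonneg ‖ψ x‖) (Finset.mem_univ u)
  have hp_uv : p ≤ ‖ψ u‖ * ‖ψ v‖ := by
    rw [← pow_le_pow_iff_left₀ hπmin.le (by positivity) two_ne_zero, mul_pow, sq p]
    exact mul_le_mul (hp_le u) (hp_le v) hπmin.le (sq_nonneg _)
  obtain ⟨q, hq_deg, hq_small, hq_one⟩ :=
    exists_polynomial_abs_eval_le_one_inv_lt_eval_one hΔpos hπmin hp_one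
  have hq_top : 1 < q.eval 1 * (‖ψ u‖ * ‖ψ v‖) :=
    calc 1 = p⁻¹ * p := (inv_mul_cancel₀ hπmin.ne').symm
      _ < q.eval 1 * p := mul_lt_mul_of_pos_right hq_one hπmin
      _ ≤ q.eval 1 * (‖ψ u‖ * ‖ψ v‖) := by
          gcongr; exact ((inv_pos.mpr hπmin).trans hq_one).le
  obtain ⟨k, hk, hne⟩ := exists_pow_apply_ne_zero_of_aeval_apply_ne_zero <|
    hG.aeval_apply_ne_zero_of_dominant_top_eigenvalue hψunit hsimple hψeig
      (fun i hi => hq_small _ ⟨(hspec i).1, (hgap i).resolve_left hi⟩) hq_top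
  exact ⟨k, (Nat.cast_le.mpr hk).trans hq_deg, hne⟩

theorem stmt14 (n : ℕ) (hn : 0 < n)
    (G : Matrix (Fin n) (Fin n) ℂ) (hG : G.IsHermitian)
    -- all eigenvalues of `G` lie in `[0,1]`
    (hspec : ∀ i, hG.eigenvalues i ∈ Set.Icc (0 : ℝ) 1)
    -- `ψ` is a unit eigenvector of `G` for the simple eigenvalue 1
    (ψ : Fin n → ℂ) (hψunit : star ψ ⬝ᵥ ψ = 1) (hψeig : G.mulVec ψ = ψ)
    (hsimple : ∀ φ : Fin n → ℂ, G.mulVec φ = φ → ∃ c : ℂ, φ = c • ψ)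
    -- `π_min` is the minimum squared overlap of `ψ` with the basis, and is positive
    (hπmin : 0 < ⨅ x, ‖ψ x‖ ^ 2)
    -- `Δ = 1 − λ₂`: all eigenvalues other than the simple top eigenvalue 1
    -- are at most `1 − Δ`
    (Δ : ℝ) (hΔpos : 0 < Δ)
    (hgap : ∀ i, hG.eigenvalues i = 1 ∨ hG.eigenvalues i ≤ 1 - Δ) :
    ∀ u v : Fin n, ∃ k : ℕ,
      (k : ℝ) ≤ (1 + 1 / Real.sqrt (2 * Δ))
          * Real.log (2 / ⨅ x, ‖ψ x‖ ^ 2) + 1 ∧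
      (G ^ k) u v ≠ 0 :=
  stmt14_general n G hG hspec ψ hψunit hψeig hsimple hπmin Δ hΔpos hgap
end

section
/- For every real Δ ∈ (0,1) and every integer k ≥ 1 there exists a real polynomial p of degree at most k such that p(1) = 1 and |p(x)| ≤ 2·(1 + √(2Δ))^{−k} for all x ∈ [0, 1−Δ]. -/
open Polynomial Polynomial.Chebyshev

lemma natDegree_cheb_le : ∀ n : ℕ, (T ℝ (n : ℤ)).natDegree ≤ n := by
  intro n
  induction n using Nat.strong_induction_on with
  | _ n ih =>
    match n with
    | 0 => simp [T_zero]
    | 1 => simp [T_one]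
    | (m + 2) =>
      have h : ((m : ℤ) + 2) = ((m + 2 : ℕ) : ℤ) := by push_cast; ring
      have := T_add_two ℝ (m : ℤ)
      rw [h] at this
      rw [this]
      refine le_trans (natDegree_sub_le _ _) (max_le ?_ ?_)
      · refine le_trans (natDegree_mul_le) ?_
        have h1 : ((m : ℤ) + 1) = ((m + 1 : ℕ) : ℤ) := by push_cast; ring
        rw [h1]
        have h2 : (2 * X : ℝ[X]).natDegree ≤ 1 := by
          refine le_trans (natDegree_mul_le) ?_
          simp
        have := ih (m + 1) (by omega)
        omega
      · exact le_trans (ih m (by omega)) (by omega)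

lemma cheb_abs_le (n : ℕ) (z : ℝ) (hz : z ∈ Set.Icc (-1 : ℝ) 1) :
    |(T ℝ (n : ℤ)).eval z| ≤ 1 := by
  obtain ⟨θ, -, hθ⟩ := Real.surjOn_cos hz
  rw [← hθ, T_real_cos]
  exact Real.abs_cos_le_one _

lemma cheb_cosh (n : ℕ) (t : ℝ) :
    (T ℝ (n : ℤ)).eval (Real.cosh t) = Real.cosh (n * t) := by
  have key : (T ℂ (n : ℤ)).eval (Complex.cosh t) = Complex.cosh ((n : ℂ) * t) := by
    rw [← Complex.cos_mul_I, T_complex_cos]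
    rw [show ((n : ℤ) : ℂ) * ((t : ℂ) * Complex.I) = ((n : ℂ) * t) * Complex.I by push_cast; ring]
    rw [Complex.cos_mul_I]
  have hmap : (T ℂ (n : ℤ)) = (T ℝ (n : ℤ)).map (algebraMap ℝ ℂ) := (map_T _ _).symm
  rw [hmap] at key
  have h2 : ((T ℝ (n : ℤ)).map (algebraMap ℝ ℂ)).eval (Complex.cosh (t : ℂ)) =
      (((T ℝ (n : ℤ)).eval (Real.cosh t) : ℝ) : ℂ) := by
    rw [← Complex.ofReal_cosh, eval_map]
    exact eval₂_at_apply _ _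
  rw [h2] at key
  have h3 : ((n : ℂ) * (t : ℂ)) = (((n : ℝ) * t : ℝ) : ℂ) := by push_cast; ring
  rw [h3, ← Complex.ofReal_cosh] at key
  exact_mod_cast key

theorem stmt15 (Δ : ℝ) (hΔ0 : 0 < Δ) (hΔ1 : Δ < 1) (k : ℕ) (hk : 1 ≤ k) :
    ∃ p : Polynomial ℝ, p.natDegree ≤ k ∧ p.eval 1 = 1 ∧
      ∀ x ∈ Set.Icc (0 : ℝ) (1 - Δ),
        |p.eval x| ≤ 2 / (1 + Real.sqrt (2 * Δ)) ^ k := by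
  set s := Real.sqrt Δ with hs
  have hs0 : 0 < s := Real.sqrt_pos.mpr hΔ0
  have hs1 : s < 1 := by
    rw [hs, show (1:ℝ) = Real.sqrt 1 by simp]
    exact Real.sqrt_lt_sqrt hΔ0.le hΔ1
  have hss : s ^ 2 = Δ := Real.sq_sqrt hΔ0.le
  have h1Δ : (0:ℝ) < 1 - Δ := by linarith
  set r : ℝ := (1 + s) / (1 - s) with hr
  have hr0 : 0 < r := div_pos (by linarith) (by linarith)
  set t : ℝ := Real.log r with ht
  have hexp : Real.exp t = r := Real.exp_log hr0
  set y : ℝ := (1 + Δ) / (1 - Δ) with hy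
  have hcosh : Real.cosh t = y := by
    have hn1 : (1 - s) ≠ 0 := by intro h; linarith [hs1]
    have hn2 : (1 + s) ≠ 0 := by positivity
    have hn3 : (1 - Δ) ≠ 0 := ne_of_gt h1Δ
    rw [Real.cosh_eq, Real.exp_neg, hexp, hy, hr, inv_div]
    field_simp
    nlinarith [hss]
  set M : ℝ := Real.cosh ((k : ℝ) * t) with hM
  have hM1 : 1 ≤ M := Real.one_le_cosh _
  have hM0 : 0 < M := lt_of_lt_of_le one_pos hM1
  -- r ≥ 1 + sqrt(2Δ)
  have hsqrt2 : Real.sqrt (2 * Δ) = Real.sqrt 2 * s := by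
    rw [hs, ← Real.sqrt_mul (by norm_num)]
  have hrge : 1 + Real.sqrt (2 * Δ) ≤ r := by
    rw [hsqrt2, hr, le_div_iff₀ (by linarith)]
    have h2 : Real.sqrt 2 < 2 := by
      nlinarith [Real.sq_sqrt (show (0:ℝ) ≤ 2 by norm_num), Real.sqrt_nonneg 2]
    have hsq2 : 0 ≤ Real.sqrt 2 := Real.sqrt_nonneg 2
    nlinarith
  have hbase0 : (0:ℝ) < 1 + Real.sqrt (2 * Δ) := by positivity
  -- M ≥ r^k / 2 ≥ (1+sqrt(2Δ))^k / 2
  have hMge : (1 + Real.sqrt (2 * Δ)) ^ k / 2 ≤ M := by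
    have h1 : (1 + Real.sqrt (2 * Δ)) ^ k ≤ r ^ k :=
      pow_le_pow_left₀ hbase0.le hrge k
    have h2 : r ^ k = Real.exp ((k : ℝ) * t) := by
      rw [← hexp, ← Real.exp_nat_mul]
    have h3 : Real.exp ((k:ℝ) * t) / 2 ≤ M := by
      rw [hM, Real.cosh_eq]
      have := Real.exp_pos (-((k:ℝ) * t))
      linarith
    calc (1 + Real.sqrt (2 * Δ)) ^ k / 2 ≤ r ^ k / 2 := by linarith
      _ = Real.exp ((k:ℝ) * t) / 2 := by rw [h2]
      _ ≤ M := h3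
  -- the affine map
  set c : ℝ := 2 / (1 - Δ) with hc
  set ℓ : ℝ[X] := C c * X - 1 with hℓ
  have hℓeval : ∀ x : ℝ, ℓ.eval x = c * x - 1 := by intro x; simp [hℓ]
  have hℓ1 : ℓ.eval 1 = y := by
    rw [hℓeval, hc, hy]; field_simp; ring
  set q : ℝ[X] := (T ℝ (k : ℤ)).comp ℓ with hq
  have hq1 : q.eval 1 = M := by
    rw [hq, eval_comp, hℓ1, ← hcosh, cheb_cosh]
  refine ⟨C M⁻¹ * q, ?_, ?_, ?_⟩
  · refine le_trans (natDegree_mul_le) ?_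
    simp only [natDegree_C, zero_add]
    refine le_trans (natDegree_comp_le) ?_
    have h1 : ℓ.natDegree ≤ 1 := by
      rw [hℓ]
      refine le_trans (natDegree_sub_le _ _) (max_le ?_ ?_)
      · exact le_trans natDegree_mul_le (by simp)
      · simp
    calc (T ℝ (k:ℤ)).natDegree * ℓ.natDegree ≤ k * 1 :=
          Nat.mul_le_mul (natDegree_cheb_le k) h1
      _ = k := mul_one k
  · rw [eval_mul, eval_C, hq1]
    field_simp
  · intro x hx
    obtain ⟨hx0, hx1⟩ := hx
    have hz : ℓ.eval x ∈ Set.Icc (-1 : ℝ) 1 := by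
      rw [hℓeval]
      constructor
      · have : 0 ≤ c * x := mul_nonneg (by positivity) hx0
        linarith
      · have : c * x ≤ c * (1 - Δ) := by
          apply mul_le_mul_of_nonneg_left hx1 (by positivity)
        have hce : c * (1 - Δ) = 2 := by rw [hc]; field_simp
        linarith
    rw [eval_mul, eval_C, hq, eval_comp, abs_mul, abs_inv, abs_of_pos hM0]
    have hT := cheb_abs_le k (ℓ.eval x) hz
    have hb0 : (0:ℝ) < (1 + Real.sqrt (2 * Δ)) ^ k := pow_pos hbase0 k
    have hkey : M⁻¹ ≤ 2 / (1 + Real.sqrt (2 * Δ)) ^ k := by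
      rw [inv_eq_one_div, div_le_div_iff₀ hM0 hb0]
      linarith
    calc M⁻¹ * |(T ℝ (k:ℤ)).eval (ℓ.eval x)| ≤ M⁻¹ * 1 := by
          exact mul_le_mul_of_nonneg_left hT (by positivity)
      _ = M⁻¹ := mul_one _
      _ ≤ 2 / (1 + Real.sqrt (2 * Δ)) ^ k := hkey
end
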